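/- arXiv:1410.8590 — 5 statements merged into one kernel-verified Lean document; each statement's English description precedes it below -/
import Mathlib

section
/- Let n ≥ 2 and give L ⊆ ℝⁿ the subspace topology. The map g: ℝⁿ → L × ℝ defined by g(x) = ((x₁ − t(x)/2, x₂ + t(x)/2, x₃ − t(x)/2, …, x_n + (−1)ⁿ·t(x)/2), t(x)/2) (i.e. the k-th coordinate of the first component is x_k + (−1)ᵏ·t(x)/2) is a well-defined homeomorphism from ℝⁿ onto L × ℝ, and it satisfies g(M) = L × (−∞,0) and g(S) = L × (0,+∞). -/
/-!
Moving `x` by `s v`, where `v_k = (-1)^(k+1)` is `1` at odd and `-1` at even `k`, raises every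
odd-minus-even difference, hence `t`, by exactly `2s`. So `t` is continuous and each line
`x + ℝ v` meets the level set `L = t⁻¹(0)` exactly once, at `x - (t(x)/2) v`; recording that point
together with `t(x)/2` straightens these lines into `L × ℝ`.
-/

/-- `t(x)`: the minimum of `x k - x k'` over paper-odd indices `k` and paper-even
indices `k'` (indices in the paper run over `{1,…,n}`; here `k : Fin n` corresponds to
the paper index `k.val + 1`). -/
noncomputable def tmin (n : ℕ) (x : Fin n → ℝ) : ℝ :=
  sInf {d : ℝ | ∃ k k' : Fin n, Odd (k.val + 1) ∧ Even (k'.val + 1) ∧ d = x k - x k'}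

def Mset (n : ℕ) : Set (Fin n → ℝ) := {x | tmin n x < 0}
def Sset (n : ℕ) : Set (Fin n → ℝ) := {x | 0 < tmin n x}
def Lset (n : ℕ) : Set (Fin n → ℝ) := {x | tmin n x = 0}

open Finset

section LevelSetProd

variable {𝕜 E : Type*} [Field 𝕜] [TopologicalSpace 𝕜] [IsTopologicalRing 𝕜]
  [TopologicalSpace E] [AddCommGroup E] [Module 𝕜 E] [IsTopologicalAddGroup E]
  [ContinuousSMul 𝕜 E]

def levelSetProdHomeomorph (f : E → 𝕜) (hf : Continuous f) (v : E) {c : 𝕜} (hc : c ≠ 0)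
    (hfv : ∀ x s, f (x + s • v) = f x + c * s) : E ≃ₜ {x | f x = 0} × 𝕜 where
  toFun x := (⟨x - (f x / c) • v, by
    rw [Set.mem_ofPred_eq, sub_eq_add_neg, ← neg_smul, hfv, mul_neg, mul_div_cancel₀ _ hc,
      add_neg_cancel]⟩, f x / c)
  invFun p := p.1 + p.2 • v
  left_inv x := sub_add_cancel x _
  right_inv := by
    rintro ⟨⟨y, hy : f y = 0⟩, s⟩
    have hs : f (y + s • v) / c = s := by rw [hfv, hy, zero_add, mul_div_cancel_left₀ _ hc]
    ext
    · simp only [hs, add_sub_cancel_right]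
    · exact hs
  continuous_toFun := by
    have hfc : Continuous fun x => f x / c := hf.div_const c
    exact ((continuous_id.sub (hfc.smul continuous_const)).subtype_mk _).prodMk hfc
  continuous_invFun := by fun_prop

end LevelSetProd

def oddEvenPairs (n : ℕ) : Finset (Fin n × Fin n) :=
  univ.filter fun p => Odd (p.1.val + 1) ∧ Even (p.2.val + 1)

theorem oddEvenPairs_nonempty {n : ℕ} (hn : 2 ≤ n) : (oddEvenPairs n).Nonempty :=
  ⟨(⟨0, by omega⟩, ⟨1, by omega⟩), by simp [oddEvenPairs]⟩

theorem tmin_eq_inf' {n : ℕ} (hn : 2 ≤ n) (x : Fin n → ℝ) :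
    tmin n x = (oddEvenPairs n).inf' (oddEvenPairs_nonempty hn) fun p => x p.1 - x p.2 := by
  rw [inf'_eq_csInf_image, tmin]
  congr 1
  ext d
  simp [oddEvenPairs, eq_comm, and_assoc]

theorem continuous_tmin {n : ℕ} (hn : 2 ≤ n) : Continuous (tmin n) := by
  simp_rw [funext (tmin_eq_inf' hn)]
  exact Continuous.finset_inf'_apply _ fun p _ => by fun_prop

def altSign (n : ℕ) : Fin n → ℝ := fun i => (-1) ^ i.val

theorem tmin_add_smul_altSign {n : ℕ} (hn : 2 ≤ n) (x : Fin n → ℝ) (s : ℝ) :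
    tmin n (x + s • altSign n) = tmin n x + 2 * s := by
  have hshift : ∀ p ∈ oddEvenPairs n, (x + s • altSign n) p.1 - (x + s • altSign n) p.2 =
      (x p.1 - x p.2) + 2 * s := by
    rintro ⟨k, k'⟩ hp
    obtain ⟨hk, hk'⟩ := (mem_filter.1 hp).2
    have hk : (-1 : ℝ) ^ k.val = 1 := (Nat.not_odd_iff_even.1 (Nat.odd_add_one.1 hk)).neg_one_pow
    have hk' : (-1 : ℝ) ^ k'.val = -1 :=
      (Nat.not_even_iff_odd.1 (Nat.even_add_one.1 hk')).neg_one_pow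
    simp only [Pi.add_apply, Pi.smul_apply, altSign, hk, hk', smul_eq_mul]
    ring
  rw [tmin_eq_inf' hn, tmin_eq_inf' hn, inf'_congr _ rfl hshift]
  exact (apply_inf'_eq_inf'_comp _ (· + 2 * s) fun a b => (min_add_add_right a b _).symm).symm

/-- The map `g(x) = ((x_k + (−1)^k t(x)/2)_k , t(x)/2)` is a well-defined homeomorphism
`ℝⁿ ≃ L × ℝ` carrying `M` onto `L × (−∞,0)` and `S` onto `L × (0,∞)`. -/
theorem stmt2 (n : ℕ) (hn : 2 ≤ n) :
    ∃ h : (Fin n → ℝ) ≃ₜ (↥(Lset n) × ℝ),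
      (∀ x : Fin n → ℝ,
        ((h x).1 : Fin n → ℝ) =
          (fun i : Fin n => x i + (-1 : ℝ) ^ (i.val + 1) * (tmin n x / 2)) ∧
        (h x).2 = tmin n x / 2) ∧
      (∀ x : Fin n → ℝ, x ∈ Mset n ↔ (h x).2 < 0) ∧
      (∀ x : Fin n → ℝ, x ∈ Sset n ↔ 0 < (h x).2) := by
  refine ⟨levelSetProdHomeomorph (tmin n) (continuous_tmin hn) (altSign n) two_ne_zero
    (tmin_add_smul_altSign hn), fun x => ⟨?_, rfl⟩, fun x => ?_, fun x => ?_⟩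
  · show x - (tmin n x / 2) • altSign n = _
    ext i
    simp only [Pi.sub_apply, Pi.smul_apply, smul_eq_mul, altSign, pow_succ]
    ring
  · show tmin n x < 0 ↔ tmin n x / 2 < 0
    exact ⟨fun h => by linarith, fun h => by linarith⟩
  · show 0 < tmin n x ↔ 0 < tmin n x / 2
    exact (div_pos_iff_of_pos_right two_pos).symm
end

section
/- Let n ≥ 2 and let σ be a sign string with 2 ≤ |σ| ≤ n. Then the closure of L_σ in ℝⁿ equals L_σ ∪ ⋃ L_τ, where the union is over all sign strings τ with |τ| > |σ| (equivalently, with |σ| < |τ| ≤ n). In particular, for any m with 2 ≤ m ≤ n, the closures of L_{σ^m} and of L_{−σ^m} intersect exactly in ⋃_{|τ| > m} L_τ. -/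
/-- A sign string of length `m` (values `±1`, alternating), 0-indexed: `s i` is the
paper's `σ(i+1)`. -/
def IsSignString (m : ℕ) (s : ℕ → ℝ) : Prop :=
  2 ≤ m ∧ (∀ j < m, s j = 1 ∨ s j = -1) ∧ ∀ j, j + 1 < m → s (j + 1) = - s j

/-- The set `L^n_σ` of level points of type `σ` in `ℝⁿ`. -/
def Lsigma (n m : ℕ) (s : ℕ → ℝ) : Set (Fin n → ℝ) :=
  {x | tmin n x = 0 ∧
    ∃ e : ℝ, (∃ k : Fin n, Odd (k.val + 1) ∧ x k = e) ∧
      (∃ k : Fin n, Even (k.val + 1) ∧ x k = e) ∧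
      ∃ J : Fin m → Set (Fin n),
        (∀ j, (J j).Nonempty) ∧
        (∀ j, ∀ a ∈ J j, ∀ c ∈ J j, ∀ b : Fin n, a ≤ b → b ≤ c → b ∈ J j) ∧
        (∀ j j' : Fin m, j < j' → ∀ k ∈ J j, ∀ k' ∈ J j', k < k') ∧
        (⋃ j, J j) = Set.univ ∧
        (∀ j : Fin m, (∃ k ∈ J j, x k = e) ∧
          ∀ k ∈ J j, x k = e → ((-1 : ℝ) ^ (k.val + 1) = s j.val))}

/-!
The type of a level point `x` only depends on the colours `(-1)^k` of the indices of its level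
set `{k | x k = e(x)}`, read from left to right: the blocks `J_j` are the runs of equal colour,
so `x ∈ L_σ` exactly when this colour word has `|σ|` runs and starts with `σ(1)`. A word with
`m` runs starting with colour `v` has an alternating subsequence of length `m` starting with
`v`, but none of length `m + 1`, and none of length `m` starting with `-v`.

Near `x` the level set of a level point can only shrink, so its alternating subsequences survive
in the level set of `x`; this gives `closure L_σ ⊆ L_σ ∪ ⋃_{|τ| > |σ|} L_τ`. Conversely, if
`x ∈ L_τ` with `|τ| > |σ|`, some `|σ|` consecutive runs of `x` carry the colours of `σ`, and
pushing the remaining indices of the level set off the level (odd ones up, even ones down) by an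
arbitrarily small amount gives points of `L_σ` converging to `x`. The statement about `σ^m` and
`-σ^m` follows because `L_{σ^m}` and `L_{-σ^m}` are disjoint.
-/

namespace IsSignString

variable {m : ℕ} {s : ℕ → ℝ}

theorem apply_zero (hs : IsSignString m s) : s 0 = 1 ∨ s 0 = -1 :=
  hs.2.1 0 (by have := hs.1; omega)

theorem apply_eq (hs : IsSignString m s) {j : ℕ} (hj : j < m) : s j = s 0 * (-1) ^ j := by
  induction j with
  | zero => simp
  | succ j ih => rw [hs.2.2 j hj, ih (by omega), pow_succ]; ring

theorem apply_zero_ne_zero (hs : IsSignString m s) : s 0 ≠ 0 := by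
  rcases hs.apply_zero with h | h <;> simp [h]

theorem eq_of_apply_zero_eq {t : ℕ → ℝ} (hs : IsSignString m s) (ht : IsSignString m t)
    (h0 : s 0 = t 0) {j : ℕ} (hj : j < m) : s j = t j := by
  rw [hs.apply_eq hj, ht.apply_eq hj, h0]

theorem exists_shift {M : ℕ} {t : ℕ → ℝ} (hs : IsSignString m s) (ht : IsSignString M t)
    (hmM : m < M) : ∃ o, o + m ≤ M ∧ ∀ j < m, s j = t (o + j) := by
  by_cases h0 : s 0 = t 0
  · exact ⟨0, by omega, fun j hj => by rw [zero_add, hs.apply_eq hj, ht.apply_eq (by omega), h0]⟩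
  · have h0' : s 0 = -t 0 := by
      rcases hs.apply_zero with h | h <;> rcases ht.apply_zero with h' | h' <;>
        simp_all
    refine ⟨1, by omega, fun j hj => ?_⟩
    rw [hs.apply_eq hj, ht.apply_eq (by omega), h0', add_comm, pow_succ]
    ring

end IsSignString

theorem isSignString_mul_neg_one_pow {m : ℕ} {v : ℝ} (hm : 2 ≤ m) (hv : v = 1 ∨ v = -1) :
    IsSignString m fun j => v * (-1) ^ j :=
  ⟨hm, fun j _ => by
    rcases hv with rfl | rfl <;> rcases neg_one_pow_eq_or ℝ j with h | h <;> simp [h],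
    fun j _ => by simp only [pow_succ]; ring⟩

section RunLabelling

variable {ι : Type*} [LinearOrder ι]

/-- The runs (the blocks `J_j` of a type) are the fibres of `f`. -/
structure IsRunLabelling (Z : Set ι) (col : ι → ℝ) (m : ℕ) (s : ℕ → ℝ) (f : ι → ℕ) : Prop where
  monotone : Monotone f
  lt : ∀ k, f k < m
  exists_mem : ∀ j < m, ∃ k ∈ Z, f k = j
  col_eq : ∀ k ∈ Z, col k = s (f k)

theorem exists_intervals_iff_exists_isRunLabelling {Z : Set ι} {col : ι → ℝ} {m : ℕ}
    {s : ℕ → ℝ} :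
    (∃ J : Fin m → Set ι,
        (∀ j, (J j).Nonempty) ∧
        (∀ j, ∀ a ∈ J j, ∀ c ∈ J j, ∀ b, a ≤ b → b ≤ c → b ∈ J j) ∧
        (∀ j j' : Fin m, j < j' → ∀ k ∈ J j, ∀ k' ∈ J j', k < k') ∧
        (⋃ j, J j) = Set.univ ∧
        (∀ j : Fin m, (∃ k ∈ J j, k ∈ Z) ∧ ∀ k ∈ J j, k ∈ Z → col k = s j.val)) ↔
      ∃ f, IsRunLabelling Z col m s f := by
  constructor
  · rintro ⟨J, -, -, hord, hcov, hZ⟩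
    choose block hblock using fun k => Set.mem_iUnion.1 (hcov ▸ Set.mem_univ k)
    have hblock_eq {k : ι} {j : Fin m} (hk : k ∈ J j) : block k = j := by
      by_contra hne
      rcases Ne.lt_or_gt hne with h | h
      · exact lt_irrefl k (hord _ _ h k (hblock k) k hk)
      · exact lt_irrefl k (hord _ _ h k hk k (hblock k))
    refine ⟨fun k => block k, ⟨fun a b hab => ?_, fun k => (block k).isLt, fun j hj => ?_,
      fun k hk => (hZ (block k)).2 k (hblock k) hk⟩⟩
    · by_contra h
      exact (hord _ _ (Fin.lt_def.2 (not_le.1 h)) b (hblock b) a (hblock a)).not_ge hab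
    · obtain ⟨k, hkJ, hkZ⟩ := (hZ ⟨j, hj⟩).1
      exact ⟨k, hkZ, by rw [hblock_eq hkJ]⟩
  · rintro ⟨f, hf⟩
    refine ⟨fun j => {k | f k = j}, fun j => ?_, ?_, ?_, ?_, fun j => ?_⟩
    · obtain ⟨k, -, hk⟩ := hf.exists_mem j j.isLt
      exact ⟨k, hk⟩
    · intro j a (ha : f a = j) c (hc : f c = j) b hab hbc
      exact le_antisymm (hc ▸ hf.monotone hbc) (ha ▸ hf.monotone hab)
    · intro j j' hjj' k (hk : f k = j) k' (hk' : f k' = j')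
      exact hf.monotone.reflect_lt (by rw [hk, hk']; exact hjj')
    · exact Set.iUnion_eq_univ_iff.2 fun k => ⟨⟨f k, hf.lt k⟩, rfl⟩
    · obtain ⟨k, hkZ, hk⟩ := hf.exists_mem j j.isLt
      exact ⟨⟨k, hk, hkZ⟩, fun k hk hkZ => (hf.col_eq k hkZ).trans (congrArg s hk)⟩

namespace IsRunLabelling

variable {Z : Set ι} {col : ι → ℝ} {m : ℕ} {s : ℕ → ℝ} {f : ι → ℕ}

theorem exists_col_eq (hf : IsRunLabelling Z col m s f) (hs : IsSignString m s) {v : ℝ}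
    (hv : v = 1 ∨ v = -1) : ∃ k ∈ Z, col k = v := by
  have hm := hs.1
  obtain ⟨k₀, hk₀, hfk₀⟩ := hf.exists_mem 0 (by omega)
  obtain ⟨k₁, hk₁, hfk₁⟩ := hf.exists_mem 1 (by omega)
  have hcol₀ : col k₀ = s 0 := by rw [hf.col_eq k₀ hk₀, hfk₀]
  have hcol₁ : col k₁ = -s 0 := by rw [hf.col_eq k₁ hk₁, hfk₁, hs.2.2 0 (by omega)]
  rcases hv with rfl | rfl <;> rcases hs.apply_zero with h | h
  exacts [⟨k₀, hk₀, hcol₀.trans h⟩, ⟨k₁, hk₁, by rw [hcol₁, h, neg_neg]⟩,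
    ⟨k₁, hk₁, by rw [hcol₁, h]⟩, ⟨k₀, hk₀, hcol₀.trans h⟩]

theorem insert {a : ι} {L : ℕ} (hf : IsRunLabelling Z col m s f) (hlt : ∀ k ∈ Z, k < a)
    (hmL : m ≤ L + 1) (hLm : L ≤ m) (ha : col a = s L) :
    IsRunLabelling (insert a Z) col (L + 1) s fun k => if k < a then f k else L where
  monotone k k' hkk' := by
    have := hf.lt k
    dsimp only
    split_ifs with h h'
    · exact hf.monotone hkk'
    · omega
    · exact absurd (lt_of_le_of_lt hkk' ‹_›) h
    · exact le_rfl
  lt k := by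
    have := hf.lt k
    split_ifs <;> omega
  exists_mem j hj := by
    by_cases hjm : j < m
    · obtain ⟨k, hk, hfk⟩ := hf.exists_mem j hjm
      exact ⟨k, Set.mem_insert_of_mem a hk, by rw [if_pos (hlt k hk), hfk]⟩
    · exact ⟨a, Set.mem_insert a Z, by rw [if_neg (lt_irrefl a)]; omega⟩
  col_eq k hk := by
    rcases hk with rfl | hk
    · rw [if_neg (lt_irrefl k), ha]
    · rw [if_pos (hlt k hk), hf.col_eq k hk]

end IsRunLabelling

theorem exists_isRunLabelling_alternating {col : ι → ℝ} (Z : Finset ι) (hZ : Z.Nonempty)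
    (hcol : ∀ k ∈ Z, col k = 1 ∨ col k = -1) :
    ∃ m, 0 < m ∧ ∃ v : ℝ, (v = 1 ∨ v = -1) ∧
      ∃ f, IsRunLabelling (↑Z) col m (fun j => v * (-1) ^ j) f := by
  classical
  induction Z using Finset.induction_on_max with
  | empty => exact absurd hZ Finset.not_nonempty_empty
  | insert a Z hlt ih =>
    have hcol_a := hcol a (Finset.mem_insert_self a Z)
    rcases Z.eq_empty_or_nonempty with rfl | hne
    · refine ⟨1, one_pos, col a, hcol_a, fun _ => 0, ⟨monotone_const, fun _ => one_pos,
        fun j hj => ⟨a, by simp, by omega⟩, fun k hk => ?_⟩⟩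
      simp only [Finset.insert_empty, Finset.coe_singleton, Set.mem_singleton_iff] at hk
      simp [hk]
    obtain ⟨m, hm, v, hv, f, hf⟩ := ih hne fun k hk => hcol k (Finset.mem_insert_of_mem hk)
    rw [Finset.coe_insert]
    by_cases hlast : col a = v * (-1) ^ (m - 1)
    · exact ⟨m - 1 + 1, by omega, v, hv, _, hf.insert hlt (by omega) (by omega) hlast⟩
    · refine ⟨m + 1, by omega, v, hv, _, hf.insert hlt (by omega) le_rfl ?_⟩
      obtain ⟨m, rfl⟩ : ∃ m', m = m' + 1 := ⟨m - 1, by omega⟩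
      rw [Nat.add_sub_cancel] at hlast
      rw [pow_succ]
      rcases hcol_a with h | h <;> rcases hv with rfl | rfl <;>
        rcases neg_one_pow_eq_or ℝ m with h' | h' <;> simp_all

theorem exists_isRunLabelling_signString {col : ι → ℝ} (Z : Finset ι)
    (hcol : ∀ k ∈ Z, col k = 1 ∨ col k = -1) (hpos : ∃ k ∈ Z, col k = 1)
    (hneg : ∃ k ∈ Z, col k = -1) :
    ∃ m s f, IsSignString m s ∧ IsRunLabelling (↑Z) col m s f := by
  obtain ⟨kp, hkp, hcolp⟩ := hpos
  obtain ⟨kn, hkn, hcoln⟩ := hneg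
  obtain ⟨m, hm, v, hv, f, hf⟩ := exists_isRunLabelling_alternating Z ⟨kp, hkp⟩ hcol
  have hm2 : 2 ≤ m := by
    by_contra! h
    have hf0 (k : ι) : f k = 0 := by have := hf.lt k; omega
    have hp := hf.col_eq kp hkp
    have hn := hf.col_eq kn hkn
    rw [hf0, hcolp] at hp
    rw [hf0, hcoln] at hn
    norm_num at hp hn
    linarith
  exact ⟨m, _, f, isSignString_mul_neg_one_pow hm2 hv, hf⟩

def HasAltChain (Z : Set ι) (col : ι → ℝ) (v : ℝ) (r : ℕ) : Prop :=
  ∃ c : Fin r → ι, StrictMono c ∧ ∀ i, c i ∈ Z ∧ col (c i) = v * (-1) ^ (i : ℕ)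

theorem HasAltChain.mono {Z Z' : Set ι} {col : ι → ℝ} {v : ℝ} {r : ℕ} (hZ : Z ⊆ Z')
    (h : HasAltChain Z col v r) : HasAltChain Z' col v r :=
  let ⟨c, hc, hcZ⟩ := h
  ⟨c, hc, fun i => ⟨hZ (hcZ i).1, (hcZ i).2⟩⟩

namespace IsRunLabelling

variable {Z : Set ι} {col : ι → ℝ} {m : ℕ} {s : ℕ → ℝ} {f : ι → ℕ}

theorem hasAltChain (hf : IsRunLabelling Z col m s f) (hs : IsSignString m s) :
    HasAltChain Z col (s 0) m := by
  choose c hcZ hcf using fun j : Fin m => hf.exists_mem j j.isLt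
  refine ⟨c, fun i j hij => hf.monotone.reflect_lt ?_, fun i => ⟨hcZ i, ?_⟩⟩
  · rw [hcf, hcf]
    exact hij
  · rw [hf.col_eq _ (hcZ i), hcf, hs.apply_eq i.isLt]

/-- Consecutive points of an alternating chain lie in distinct runs, so the labels strictly
increase along the chain; and a chain starting against the first run cannot start in it. -/
theorem le_of_hasAltChain (hf : IsRunLabelling Z col m s f) (hs : IsSignString m s) {v : ℝ}
    {r : ℕ} (hc : HasAltChain Z col v r) : r ≤ m ∧ (v ≠ s 0 → r < m) := by
  obtain ⟨c, hc, hcZ⟩ := hc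
  have hm := hs.1
  obtain _ | r := r
  · exact ⟨by omega, fun _ => by omega⟩
  have hcol (i : Fin (r + 1)) : s 0 * (-1) ^ f (c i) = v * (-1) ^ (i : ℕ) := by
    rw [← hs.apply_eq (hf.lt _), ← hf.col_eq _ (hcZ i).1, (hcZ i).2]
  have hg : StrictMono (f ∘ c) := by
    refine Fin.strictMono_iff_lt_succ.2 fun i => lt_of_le_of_ne
      (hf.monotone (hc Fin.castSucc_lt_succ).le) fun heq => hs.apply_zero_ne_zero ?_
    have h := hcol i.castSucc
    rw [show f (c i.castSucc) = f (c i.succ) from heq, hcol i.succ] at h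
    simp only [Fin.val_castSucc, Fin.val_succ, pow_succ] at h
    have : v = 0 := by
      rcases neg_one_pow_eq_or ℝ (i : ℕ) with h' | h' <;> rw [h'] at h <;> linarith
    simpa [this] using hcol 0
  have hcard := Finset.card_le_card_of_injOn (f ∘ c) (s := Finset.univ)
    (t := Finset.Ico (f (c 0)) m)
    (fun i _ => Finset.mem_Ico.2 ⟨hg.monotone (Fin.zero_le i), hf.lt _⟩) hg.injective.injOn
  simp only [Finset.card_univ, Fintype.card_fin, Nat.card_Ico] at hcard
  refine ⟨by omega, fun hv => ?_⟩
  have : f (c 0) ≠ 0 := fun h0 => hv (by simpa [h0] using (hcol 0).symm)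
  omega

theorem le_of_subset {Z' : Set ι} {m' : ℕ} {s' : ℕ → ℝ} {f' : ι → ℕ}
    (hf' : IsRunLabelling Z' col m' s' f') (hs' : IsSignString m' s') (hZ : Z' ⊆ Z)
    (hf : IsRunLabelling Z col m s f) (hs : IsSignString m s) :
    m' ≤ m ∧ (s' 0 ≠ s 0 → m' < m) :=
  hf.le_of_hasAltChain hs ((hf'.hasAltChain hs').mono hZ)

theorem exists_subset_isRunLabelling (hf : IsRunLabelling Z col m s f) (hs : IsSignString m s)
    {m' : ℕ} {s' : ℕ → ℝ} (hs' : IsSignString m' s') (hm : m' < m) :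
    ∃ Z' ⊆ Z, ∃ f', IsRunLabelling Z' col m' s' f' := by
  obtain ⟨o, ho, hs's⟩ := hs'.exists_shift hs hm
  have hm' := hs'.1
  refine ⟨{k ∈ Z | o ≤ f k ∧ f k < o + m'}, fun k hk => hk.1,
    fun k => min (f k - o) (m' - 1), ⟨fun a b hab => ?_, fun k => by omega, fun j hj => ?_, ?_⟩⟩
  · have := hf.monotone hab
    omega
  · obtain ⟨k, hk, hfk⟩ := hf.exists_mem (o + j) (by omega)
    exact ⟨k, ⟨hk, by omega, by omega⟩, by omega⟩
  · rintro k ⟨hk, hok, hkm⟩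
    rw [hf.col_eq k hk, hs's _ (by omega)]
    congr 1
    omega

end IsRunLabelling

end RunLabelling

section LevelPoints

open Filter Topology

variable {n : ℕ}

/-- `x` is level with `e(x) = e`. -/
def IsLevelAt (x : Fin n → ℝ) (e : ℝ) : Prop :=
  (∀ k : Fin n, Odd (k.val + 1) → e ≤ x k) ∧ (∀ k : Fin n, Even (k.val + 1) → x k ≤ e) ∧
    (∃ k : Fin n, Odd (k.val + 1) ∧ x k = e) ∧ (∃ k : Fin n, Even (k.val + 1) ∧ x k = e)

theorem isLevelAt_iff_tmin {x : Fin n → ℝ} {e : ℝ} :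
    IsLevelAt x e ↔ tmin n x = 0 ∧ (∃ k : Fin n, Odd (k.val + 1) ∧ x k = e) ∧
      ∃ k : Fin n, Even (k.val + 1) ∧ x k = e := by
  set D := {d : ℝ | ∃ k k' : Fin n, Odd (k.val + 1) ∧ Even (k'.val + 1) ∧ d = x k - x k'}
  have hD : BddBelow D := by
    refine (Set.finite_range fun p : Fin n × Fin n => x p.1 - x p.2).subset ?_ |>.bddBelow
    rintro d ⟨k, k', -, -, rfl⟩
    exact ⟨(k, k'), rfl⟩
  constructor
  · rintro ⟨hodd, heven, ⟨k, hk, hke⟩, ⟨k', hk', hk'e⟩⟩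
    refine ⟨IsLeast.csInf_eq ⟨⟨k, k', hk, hk', by rw [hke, hk'e, sub_self]⟩, ?_⟩, ⟨k, hk, hke⟩,
      ⟨k', hk', hk'e⟩⟩
    rintro d ⟨l, l', hl, hl', rfl⟩
    linarith [hodd l hl, heven l' hl']
  · rintro ⟨ht, ⟨k, hk, hke⟩, ⟨k', hk', hk'e⟩⟩
    have hle {l l' : Fin n} (hl : Odd (l.val + 1)) (hl' : Even (l'.val + 1)) : x l' ≤ x l := by
      have := csInf_le hD ⟨l, l', hl, hl', rfl⟩
      rw [show sInf D = tmin n x from rfl, ht] at this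
      linarith
    exact ⟨fun l hl => hk'e ▸ hle hl hk', fun l hl => hke ▸ hle hk hl, ⟨k, hk, hke⟩,
      ⟨k', hk', hk'e⟩⟩

theorem IsLevelAt.unique {x : Fin n → ℝ} {e e' : ℝ} (h : IsLevelAt x e) (h' : IsLevelAt x e') :
    e = e' := by
  obtain ⟨k, hk, hke⟩ := h.2.2.1
  obtain ⟨k', hk', hk'e⟩ := h'.2.2.1
  linarith [hke ▸ h'.1 k hk, hk'e ▸ h.1 k' hk']

theorem isClosed_setOf_exists_isLevelAt : IsClosed {x : Fin n → ℝ | ∃ e, IsLevelAt x e} := by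
  have heq : {x : Fin n → ℝ | ∃ e, IsLevelAt x e} =
      (⋂ k ∈ {k : Fin n | Odd (k.val + 1)}, ⋂ k' ∈ {k' : Fin n | Even (k'.val + 1)},
        {x | x k' ≤ x k}) ∩
      ⋃ k ∈ {k : Fin n | Odd (k.val + 1)}, ⋃ k' ∈ {k' : Fin n | Even (k'.val + 1)},
        {x | x k = x k'} := by
    ext x
    simp only [Set.mem_ofPred_eq, Set.mem_inter_iff, Set.mem_iInter, Set.mem_iUnion,
      exists_prop]
    constructor
    · rintro ⟨e, hodd, heven, ⟨k, hk, hke⟩, ⟨k', hk', hk'e⟩⟩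
      exact ⟨fun l hl l' hl' => (heven l' hl').trans (hodd l hl),
        ⟨k, hk, k', hk', hke.trans hk'e.symm⟩⟩
    · rintro ⟨hle, ⟨k, hk, k', hk', hkk'⟩⟩
      exact ⟨x k, fun l hl => hkk' ▸ hle l hl k' hk', fun l' hl' => hle k hk l' hl',
        ⟨k, hk, rfl⟩, ⟨k', hk', hkk'.symm⟩⟩
  rw [heq]
  exact (isClosed_biInter fun k _ => isClosed_biInter fun k' _ =>
      isClosed_le (continuous_apply k') (continuous_apply k)).inter
    ((Set.toFinite _).isClosed_biUnion fun k _ => (Set.toFinite _).isClosed_biUnion fun k' _ =>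
      isClosed_eq (continuous_apply k) (continuous_apply k'))

/-- Near `x`, a coordinate away from `e(x)` stays strictly on its side of a coordinate of the
same parity that equals `e(x)`, so it cannot reach the level of the nearby point. -/
theorem IsLevelAt.eventually_levelSet_subset {x : Fin n → ℝ} {e : ℝ} (hx : IsLevelAt x e) :
    ∀ᶠ y in 𝓝 x, ∀ e', IsLevelAt y e' → {k | y k = e'} ⊆ {k | x k = e} := by
  obtain ⟨hodd, heven, ⟨k₁, hk₁, hk₁e⟩, ⟨k₂, hk₂, hk₂e⟩⟩ := hx
  suffices ∀ k, ∀ᶠ y in 𝓝 x, x k ≠ e → ∀ e', IsLevelAt y e' → y k ≠ e' by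
    filter_upwards [eventually_all.2 this] with y hy e' hy' k hk
    by_contra hne
    exact hy k hne e' hy' hk
  intro k
  by_cases hke : x k = e
  · exact Eventually.of_forall fun _ h => absurd hke h
  rcases Nat.even_or_odd (k.val + 1) with hk | hk
  · have hlt : x k < x k₂ := hk₂e ▸ lt_of_le_of_ne (heven k hk) hke
    filter_upwards [(continuous_apply k).continuousAt.eventually_lt
        (continuous_apply k₂).continuousAt hlt]
      with y hy _ e' hy'
    exact (lt_of_lt_of_le hy (hy'.2.1 k₂ hk₂)).ne
  · have hlt : x k₁ < x k := hk₁e ▸ lt_of_le_of_ne (hodd k hk) (Ne.symm hke)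
    filter_upwards [(continuous_apply k₁).continuousAt.eventually_lt
        (continuous_apply k).continuousAt hlt]
      with y hy _ e' hy'
    exact (lt_of_le_of_lt (hy'.1 k₁ hk₁) hy).ne'

/-- The paper's sign `(-1)^k` of the index `k`, which is `k.val + 1` in the paper's numbering. -/
def indexSign (k : Fin n) : ℝ := (-1) ^ (k.val + 1)

theorem indexSign_eq_neg_one_iff {k : Fin n} : indexSign k = -1 ↔ Odd (k.val + 1) :=
  neg_one_pow_eq_neg_one_iff_odd (by norm_num)

theorem indexSign_eq_one_iff {k : Fin n} : indexSign k = 1 ↔ Even (k.val + 1) :=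
  neg_one_pow_eq_one_iff_even (by norm_num)

theorem IsLevelAt.mem_closure_setOf_levelSet_eq {x : Fin n → ℝ} {e : ℝ} (hx : IsLevelAt x e)
    {Z : Set (Fin n)} (hZ : Z ⊆ {k | x k = e}) (hodd : ∃ k ∈ Z, Odd (k.val + 1))
    (heven : ∃ k ∈ Z, Even (k.val + 1)) :
    x ∈ closure {y | IsLevelAt y e ∧ {k | y k = e} = Z} := by
  classical
  -- odd coordinates are pushed up and even ones down, which keeps the point level at `e`
  set y : ℝ → Fin n → ℝ := fun t k => if x k = e ∧ k ∉ Z then x k - t * indexSign k else x k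
  have hcont : Continuous y := continuous_pi fun k => by
    dsimp only [y]
    split_ifs <;> fun_prop
  have hy0 : y 0 = x := by
    ext k
    simp [y]
  refine mem_closure_of_tendsto (b := 𝓝[>] 0) (hy0 ▸ (hcont.tendsto 0).mono_left
    nhdsWithin_le_nhds) ?_
  filter_upwards [self_mem_nhdsWithin] with t (ht : 0 < t)
  have hoff {k : Fin n} (h : x k = e ∧ k ∉ Z) : y t k = e - t * indexSign k := by
    simp only [y, if_pos h, h.1]
  have hon {k : Fin n} (h : ¬(x k = e ∧ k ∉ Z)) : y t k = x k := by
    simp only [y, if_neg h]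
  have hlevel (k : Fin n) : y t k = e ↔ k ∈ Z := by
    by_cases h : x k = e ∧ k ∉ Z
    · rw [hoff h]
      have : indexSign k ≠ 0 := pow_ne_zero _ (by norm_num)
      simp only [sub_eq_self, mul_eq_zero, ht.ne', this, or_self, h.2]
    · rw [hon h]
      exact ⟨fun hk => by_contra fun hkZ => h ⟨hk, hkZ⟩, fun hkZ => hZ hkZ⟩
  refine ⟨⟨fun k hk => ?_, fun k hk => ?_, ?_, ?_⟩, Set.ext hlevel⟩
  · by_cases h : x k = e ∧ k ∉ Z
    · rw [hoff h, indexSign_eq_neg_one_iff.2 hk]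
      linarith
    · exact hon h ▸ hx.1 k hk
  · by_cases h : x k = e ∧ k ∉ Z
    · rw [hoff h, indexSign_eq_one_iff.2 hk]
      linarith
    · exact hon h ▸ hx.2.1 k hk
  · obtain ⟨k, hkZ, hk⟩ := hodd
    exact ⟨k, hk, (hlevel k).2 hkZ⟩
  · obtain ⟨k, hkZ, hk⟩ := heven
    exact ⟨k, hk, (hlevel k).2 hkZ⟩

theorem mem_lsigma_iff {m : ℕ} {s : ℕ → ℝ} {x : Fin n → ℝ} :
    x ∈ Lsigma n m s ↔
      ∃ e, IsLevelAt x e ∧ ∃ f, IsRunLabelling {k | x k = e} indexSign m s f := by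
  constructor
  · rintro ⟨ht, e, hodd, heven, hJ⟩
    exact ⟨e, isLevelAt_iff_tmin.2 ⟨ht, hodd, heven⟩,
      exists_intervals_iff_exists_isRunLabelling.1 hJ⟩
  · rintro ⟨e, he, hf⟩
    obtain ⟨ht, hodd, heven⟩ := isLevelAt_iff_tmin.1 he
    exact ⟨ht, e, hodd, heven, exists_intervals_iff_exists_isRunLabelling.2 hf⟩

end LevelPoints

section Closure

variable {n m : ℕ} {s : ℕ → ℝ}

theorem IsLevelAt.exists_isRunLabelling {x : Fin n → ℝ} {e : ℝ} (hx : IsLevelAt x e) :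
    ∃ M t g, IsSignString M t ∧ IsRunLabelling {k | x k = e} indexSign M t g := by
  classical
  obtain ⟨-, -, ⟨k₁, hk₁, hk₁e⟩, ⟨k₂, hk₂, hk₂e⟩⟩ := hx
  have := exists_isRunLabelling_signString (col := indexSign)
    (Finset.univ.filter fun k => x k = e) (fun k _ => neg_one_pow_eq_or ℝ _)
    ⟨k₂, by simpa using hk₂e, indexSign_eq_one_iff.2 hk₂⟩
    ⟨k₁, by simpa using hk₁e, indexSign_eq_neg_one_iff.2 hk₁⟩
  rwa [Finset.coe_filter_univ] at this

theorem closure_lsigma_subset (hs : IsSignString m s) :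
    closure (Lsigma n m s) ⊆ Lsigma n m s ∪
      {x | ∃ m' s', IsSignString m' s' ∧ m < m' ∧ x ∈ Lsigma n m' s'} := by
  intro x hx
  obtain ⟨e, he⟩ : ∃ e, IsLevelAt x e :=
    isClosed_setOf_exists_isLevelAt.closure_subset_iff.2
      (fun y hy => (mem_lsigma_iff.1 hy).imp fun _ => And.left) hx
  obtain ⟨M, t, g, ht, hg⟩ := he.exists_isRunLabelling
  obtain ⟨y, hyx, hy⟩ := mem_closure_iff_nhds.1 hx _ he.eventually_levelSet_subset
  obtain ⟨e', he', f, hf⟩ := mem_lsigma_iff.1 hy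
  obtain ⟨hmM, hlt⟩ := hf.le_of_subset hs (hyx e' he') hg ht
  rcases hmM.lt_or_eq with hmM | rfl
  · exact Or.inr ⟨M, t, ht, hmM, mem_lsigma_iff.2 ⟨e, he, g, hg⟩⟩
  · have h0 : s 0 = t 0 := by_contra fun h => lt_irrefl m (hlt h)
    exact Or.inl (mem_lsigma_iff.2 ⟨e, he, g, hg.monotone, hg.lt, hg.exists_mem,
      fun k hk => (hg.col_eq k hk).trans (hs.eq_of_apply_zero_eq ht h0 (hg.lt k)).symm⟩)

theorem lsigma_subset_closure {M : ℕ} {t : ℕ → ℝ} (hs : IsSignString m s)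
    (ht : IsSignString M t) (hmM : m < M) : Lsigma n M t ⊆ closure (Lsigma n m s) := by
  intro x hx
  obtain ⟨e, he, g, hg⟩ := mem_lsigma_iff.1 hx
  obtain ⟨Z, hZ, f, hf⟩ := hg.exists_subset_isRunLabelling ht hs hmM
  obtain ⟨k₁, hk₁Z, hk₁⟩ := hf.exists_col_eq hs (Or.inr rfl)
  obtain ⟨k₂, hk₂Z, hk₂⟩ := hf.exists_col_eq hs (Or.inl rfl)
  refine closure_mono ?_ (he.mem_closure_setOf_levelSet_eq hZ
    ⟨k₁, hk₁Z, indexSign_eq_neg_one_iff.1 hk₁⟩ ⟨k₂, hk₂Z, indexSign_eq_one_iff.1 hk₂⟩)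
  rintro y ⟨hy, rfl⟩
  exact mem_lsigma_iff.2 ⟨e, hy, f, hf⟩

theorem closure_lsigma (hs : IsSignString m s) :
    closure (Lsigma n m s) = Lsigma n m s ∪
      {x | ∃ m' s', IsSignString m' s' ∧ m < m' ∧ x ∈ Lsigma n m' s'} :=
  (closure_lsigma_subset hs).antisymm <| Set.union_subset subset_closure
    fun _ ⟨_, _, ht, hmM, hx⟩ => lsigma_subset_closure hs ht hmM hx

theorem disjoint_lsigma {t : ℕ → ℝ} (hs : IsSignString m s) (ht : IsSignString m t)
    (h0 : s 0 ≠ t 0) : Disjoint (Lsigma n m s) (Lsigma n m t) := by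
  refine Set.disjoint_left.2 fun x hxs hxt => ?_
  obtain ⟨e, he, f, hf⟩ := mem_lsigma_iff.1 hxs
  obtain ⟨e', he', g, hg⟩ := mem_lsigma_iff.1 hxt
  obtain rfl := he.unique he'
  exact lt_irrefl m ((hf.le_of_subset hs subset_rfl hg ht).2 h0)

end Closure

theorem stmt4_general (n m : ℕ) (s : ℕ → ℝ)
    (hs : IsSignString m s) :
    closure (Lsigma n m s) =
      Lsigma n m s ∪
        {x : Fin n → ℝ | ∃ m' : ℕ, ∃ s' : ℕ → ℝ,
          IsSignString m' s' ∧ m < m' ∧ x ∈ Lsigma n m' s'} ∧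
    closure (Lsigma n m (fun i => (-1 : ℝ) ^ (i + 1))) ∩
        closure (Lsigma n m (fun i => (-1 : ℝ) ^ i)) =
      {x : Fin n → ℝ | ∃ m' : ℕ, ∃ s' : ℕ → ℝ,
        IsSignString m' s' ∧ m < m' ∧ x ∈ Lsigma n m' s'} := by
  have hodd : IsSignString m fun i => (-1 : ℝ) ^ (i + 1) := by
    convert isSignString_mul_neg_one_pow hs.1 (Or.inr rfl) using 2 with i
    ring
  have heven : IsSignString m fun i => (-1 : ℝ) ^ i := by
    simpa using isSignString_mul_neg_one_pow hs.1 (Or.inl rfl)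
  refine ⟨closure_lsigma hs, ?_⟩
  rw [closure_lsigma hodd, closure_lsigma heven, ← Set.inter_union_distrib_right,
    (disjoint_lsigma hodd heven (by norm_num)).inter_eq, Set.empty_union]

/-- The closure of `L_σ` is `L_σ ∪ ⋃_{|τ|>|σ|} L_τ`; in particular the closures of
`L_{σ^m}` and `L_{−σ^m}` intersect exactly in `⋃_{|τ|>m} L_τ`. -/
theorem stmt4 (n m : ℕ) (hn : 2 ≤ n) (hmn : m ≤ n) (s : ℕ → ℝ)
    (hs : IsSignString m s) :
    closure (Lsigma n m s) =
      Lsigma n m s ∪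
        {x : Fin n → ℝ | ∃ m' : ℕ, ∃ s' : ℕ → ℝ,
          IsSignString m' s' ∧ m < m' ∧ x ∈ Lsigma n m' s'} ∧
    closure (Lsigma n m (fun i => (-1 : ℝ) ^ (i + 1))) ∩
        closure (Lsigma n m (fun i => (-1 : ℝ) ^ i)) =
      {x : Fin n → ℝ | ∃ m' : ℕ, ∃ s' : ℕ → ℝ,
        IsSignString m' s' ∧ m < m' ∧ x ∈ Lsigma n m' s'} :=
  stmt4_general n m s hs
end

section
/- Let k ≥ 1 and let X be a topological space which is the union of two closed subsets H₁ and H₂. Suppose there exist homeomorphisms g₁: H₁ → ℍ^k and g₂: H₂ → ℍ^k (with subspace topologies) such that g₁(H₁ ∩ H₂) = ∂ℍ^k and g₂(H₁ ∩ H₂) = ∂ℍ^k. Then there exists a homeomorphism f: X → ℝ^k such that f(H₁) = ℍ^k and f(H₂) = −ℍ^k. -/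
/-- The closed half-space `ℍ^k = {x ∈ ℝ^k : x_k ≥ 0}` (the condition bears on the last
coordinate, the unique `i : Fin k` with `i.val = k - 1`). -/
def Hpos (k : ℕ) : Set (Fin k → ℝ) := {x | ∀ i : Fin k, i.val = k - 1 → 0 ≤ x i}

/-- The closed half-space `−ℍ^k = {x ∈ ℝ^k : x_k ≤ 0}`. -/
def Hneg (k : ℕ) : Set (Fin k → ℝ) := {x | ∀ i : Fin k, i.val = k - 1 → x i ≤ 0}

/-- The boundary hyperplane `∂ℍ^k = {x ∈ ℝ^k : x_k = 0}`. -/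
def Hbd (k : ℕ) : Set (Fin k → ℝ) := {x | ∀ i : Fin k, i.val = k - 1 → x i = 0}

namespace Stmt5Aux

open Function Set

variable {m : ℕ} {X : Type} [TopologicalSpace X] {H₁ H₂ : Set X}

abbrev L (m : ℕ) : Fin (m+1) := Fin.last m

lemma mem_Hpos {y : Fin (m+1) → ℝ} : y ∈ Hpos (m+1) ↔ 0 ≤ y (L m) := by
  constructor
  · intro h; exact h _ (by simp)
  · intro h i hi
    have : i = L m := Fin.ext (by simpa using hi)
    rwa [this]

lemma mem_Hneg {y : Fin (m+1) → ℝ} : y ∈ Hneg (m+1) ↔ y (L m) ≤ 0 := by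
  constructor
  · intro h; exact h _ (by simp)
  · intro h i hi
    have : i = L m := Fin.ext (by simpa using hi)
    rwa [this]

lemma mem_Hbd {y : Fin (m+1) → ℝ} : y ∈ Hbd (m+1) ↔ y (L m) = 0 := by
  constructor
  · intro h; exact h _ (by simp)
  · intro h i hi
    have : i = L m := Fin.ext (by simpa using hi)
    rwa [this]

lemma Hbd_subset_Hpos : Hbd (m+1) ⊆ Hpos (m+1) :=
  fun _ hy => mem_Hpos.2 (le_of_eq (mem_Hbd.1 hy).symm)

lemma Hbd_subset_Hneg : Hbd (m+1) ⊆ Hneg (m+1) :=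
  fun _ hy => mem_Hneg.2 (le_of_eq (mem_Hbd.1 hy))

def pr (y : Fin (m+1) → ℝ) : Fin (m+1) → ℝ := Function.update y (L m) 0

lemma pr_mem_Hbd (y : Fin (m+1) → ℝ) : pr y ∈ Hbd (m+1) := mem_Hbd.2 (by simp [pr])

lemma pr_eq_self {y : Fin (m+1) → ℝ} (hy : y ∈ Hbd (m+1)) : pr y = y := by
  have h := mem_Hbd.1 hy
  show Function.update y (L m) 0 = y
  rw [← h]
  exact Function.update_eq_self _ _

lemma pr_update (y : Fin (m+1) → ℝ) (c : ℝ) :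
    pr (Function.update y (L m) c) = pr y := by
  simp [pr, Function.update_idem]

lemma pr_continuous : Continuous (pr (m := m)) :=
  continuous_id.update (L m) continuous_const

section Maps

variable (g₁ : ↥H₁ ≃ₜ ↥(Hpos (m+1))) (g₂ : ↥H₂ ≃ₜ ↥(Hpos (m+1)))

/-- Pull a point back through `g₂` after projecting to the boundary. -/
def back₂ (y : Fin (m+1) → ℝ) : ↥H₂ :=
  g₂.symm ⟨pr y, Hbd_subset_Hpos (pr_mem_Hbd y)⟩

def back₁ (y : Fin (m+1) → ℝ) : ↥H₁ :=
  g₁.symm ⟨pr y, Hbd_subset_Hpos (pr_mem_Hbd y)⟩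

/-- Abbreviation for the boundary-compatibility hypothesis on `g₁`. -/
abbrev Cb₁ (g₁ : ↥H₁ ≃ₜ ↥(Hpos (m+1))) : Prop :=
  ∀ y : ↥H₁, ((y : X) ∈ H₁ ∩ H₂ ↔ ((g₁ y : Fin (m+1) → ℝ) ∈ Hbd (m+1)))

/-- Abbreviation for the boundary-compatibility hypothesis on `g₂`. -/
abbrev Cb₂ (g₂ : ↥H₂ ≃ₜ ↥(Hpos (m+1))) : Prop :=
  ∀ y : ↥H₂, ((y : X) ∈ H₁ ∩ H₂ ↔ ((g₂ y : Fin (m+1) → ℝ) ∈ Hbd (m+1)))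

lemma back₂_mem (hb₂ : Cb₂ (H₁ := H₁) g₂) (y : Fin (m+1) → ℝ) :
    ((back₂ g₂ y : X) ∈ H₁ ∩ H₂) :=
  (hb₂ _).2 (by rw [back₂, Homeomorph.apply_symm_apply]; exact pr_mem_Hbd y)

lemma back₁_mem (hb₁ : Cb₁ (H₂ := H₂) g₁) (y : Fin (m+1) → ℝ) :
    ((back₁ g₁ y : X) ∈ H₁ ∩ H₂) :=
  (hb₁ _).2 (by rw [back₁, Homeomorph.apply_symm_apply]; exact pr_mem_Hbd y)

/-- The boundary transition map `g₁ ∘ g₂⁻¹` (pre-composed with boundary projection). -/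
def Amap (hb₂ : Cb₂ (H₁ := H₁) g₂) (y : Fin (m+1) → ℝ) : Fin (m+1) → ℝ :=
  (g₁ ⟨(back₂ g₂ y : X), (back₂_mem g₂ hb₂ y).1⟩ : Fin (m+1) → ℝ)

def Bmap (hb₁ : Cb₁ (H₂ := H₂) g₁) (y : Fin (m+1) → ℝ) : Fin (m+1) → ℝ :=
  (g₂ ⟨(back₁ g₁ y : X), (back₁_mem g₁ hb₁ y).2⟩ : Fin (m+1) → ℝ)

lemma Amap_mem_Hbd (hb₁ : Cb₁ (H₂ := H₂) g₁) (hb₂ : Cb₂ (H₁ := H₁) g₂)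
    (y : Fin (m+1) → ℝ) : Amap g₁ g₂ hb₂ y ∈ Hbd (m+1) :=
  (hb₁ _).1 ⟨(back₂_mem g₂ hb₂ y).1, (back₂ g₂ y).2⟩

lemma Bmap_mem_Hbd (hb₁ : Cb₁ (H₂ := H₂) g₁) (hb₂ : Cb₂ (H₁ := H₁) g₂)
    (y : Fin (m+1) → ℝ) : Bmap g₁ g₂ hb₁ y ∈ Hbd (m+1) :=
  (hb₂ _).1 ⟨(back₁ g₁ y).2, (back₁_mem g₁ hb₁ y).2⟩

lemma Amap_continuous (hb₂ : Cb₂ (H₁ := H₁) g₂) : Continuous (Amap g₁ g₂ hb₂) := by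
  apply continuous_subtype_val.comp
  apply g₁.continuous.comp
  apply Continuous.subtype_mk
  apply continuous_subtype_val.comp
  apply g₂.symm.continuous.comp
  exact pr_continuous.subtype_mk _

lemma Bmap_continuous (hb₁ : Cb₁ (H₂ := H₂) g₁) : Continuous (Bmap g₁ g₂ hb₁) := by
  apply continuous_subtype_val.comp
  apply g₂.continuous.comp
  apply Continuous.subtype_mk
  apply continuous_subtype_val.comp
  apply g₁.symm.continuous.comp
  exact pr_continuous.subtype_mk _

lemma Amap_congr (hb₂ : Cb₂ (H₁ := H₁) g₂) {y y' : Fin (m+1) → ℝ} (h : pr y = pr y') :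
    Amap g₁ g₂ hb₂ y = Amap g₁ g₂ hb₂ y' := by
  have h2 : (⟨pr y, Hbd_subset_Hpos (pr_mem_Hbd y)⟩ : ↥(Hpos (m+1)))
      = ⟨pr y', Hbd_subset_Hpos (pr_mem_Hbd y')⟩ := Subtype.ext h
  have h3 : back₂ g₂ y = back₂ g₂ y' := by rw [back₂, back₂, h2]
  simp only [Amap, h3]

lemma Bmap_congr (hb₁ : Cb₁ (H₂ := H₂) g₁) {y y' : Fin (m+1) → ℝ} (h : pr y = pr y') :
    Bmap g₁ g₂ hb₁ y = Bmap g₁ g₂ hb₁ y' := by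
  have h2 : (⟨pr y, Hbd_subset_Hpos (pr_mem_Hbd y)⟩ : ↥(Hpos (m+1)))
      = ⟨pr y', Hbd_subset_Hpos (pr_mem_Hbd y')⟩ := Subtype.ext h
  have h3 : back₁ g₁ y = back₁ g₁ y' := by rw [back₁, back₁, h2]
  simp only [Bmap, h3]

lemma Bmap_Amap (hb₁ : Cb₁ (H₂ := H₂) g₁) (hb₂ : Cb₂ (H₁ := H₁) g₂) (y : Fin (m+1) → ℝ) :
    Bmap g₁ g₂ hb₁ (Amap g₁ g₂ hb₂ y) = pr y := by
  have h1 : pr (Amap g₁ g₂ hb₂ y) = Amap g₁ g₂ hb₂ y :=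
    pr_eq_self (Amap_mem_Hbd g₁ g₂ hb₁ hb₂ y)
  have key : (⟨pr (Amap g₁ g₂ hb₂ y), Hbd_subset_Hpos (pr_mem_Hbd _)⟩ : ↥(Hpos (m+1)))
      = g₁ ⟨(back₂ g₂ y : X), (back₂_mem g₂ hb₂ y).1⟩ := Subtype.ext h1
  have h2 : back₁ g₁ (Amap g₁ g₂ hb₂ y)
      = ⟨(back₂ g₂ y : X), (back₂_mem g₂ hb₂ y).1⟩ := by
    rw [back₁, key, Homeomorph.symm_apply_apply]
  have h3 : (⟨(back₁ g₁ (Amap g₁ g₂ hb₂ y) : X),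
      (back₁_mem g₁ hb₁ (Amap g₁ g₂ hb₂ y)).2⟩ : ↥H₂) = back₂ g₂ y :=
    by apply Subtype.ext; have h4 := congrArg Subtype.val h2; exact h4
  show ((g₂ _ : ↥(Hpos (m+1))) : Fin (m+1) → ℝ) = pr y
  rw [h3, back₂, Homeomorph.apply_symm_apply]

lemma Amap_Bmap (hb₁ : Cb₁ (H₂ := H₂) g₁) (hb₂ : Cb₂ (H₁ := H₁) g₂) (y : Fin (m+1) → ℝ) :
    Amap g₁ g₂ hb₂ (Bmap g₁ g₂ hb₁ y) = pr y := by
  have h1 : pr (Bmap g₁ g₂ hb₁ y) = Bmap g₁ g₂ hb₁ y :=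
    pr_eq_self (Bmap_mem_Hbd g₁ g₂ hb₁ hb₂ y)
  have key : (⟨pr (Bmap g₁ g₂ hb₁ y), Hbd_subset_Hpos (pr_mem_Hbd _)⟩ : ↥(Hpos (m+1)))
      = g₂ ⟨(back₁ g₁ y : X), (back₁_mem g₁ hb₁ y).2⟩ := Subtype.ext h1
  have h2 : back₂ g₂ (Bmap g₁ g₂ hb₁ y)
      = ⟨(back₁ g₁ y : X), (back₁_mem g₁ hb₁ y).2⟩ := by
    rw [back₂, key, Homeomorph.symm_apply_apply]
  have h3 : (⟨(back₂ g₂ (Bmap g₁ g₂ hb₁ y) : X),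
      (back₂_mem g₂ hb₂ (Bmap g₁ g₂ hb₁ y)).1⟩ : ↥H₁) = back₁ g₁ y :=
    by apply Subtype.ext; have h4 := congrArg Subtype.val h2; exact h4
  show ((g₁ _ : ↥(Hpos (m+1))) : Fin (m+1) → ℝ) = pr y
  rw [h3, back₁, Homeomorph.apply_symm_apply]


/-- The forward map on the `H₂` chart: transition on boundary part, negate last coord. -/
def negFlip (hb₂ : Cb₂ (H₁ := H₁) g₂) (y : Fin (m+1) → ℝ) : Fin (m+1) → ℝ :=
  Function.update (Amap g₁ g₂ hb₂ y) (L m) (-(y (L m)))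

/-- The inverse map on the negative half-space. -/
def posFlip (hb₁ : Cb₁ (H₂ := H₂) g₁) (y : Fin (m+1) → ℝ) : Fin (m+1) → ℝ :=
  Function.update (Bmap g₁ g₂ hb₁ y) (L m) (-(y (L m)))

lemma negFlip_continuous (hb₂ : Cb₂ (H₁ := H₁) g₂) : Continuous (negFlip g₁ g₂ hb₂) :=
  (Amap_continuous g₁ g₂ hb₂).update (L m) ((continuous_apply (L m)).neg)

lemma posFlip_continuous (hb₁ : Cb₁ (H₂ := H₂) g₁) : Continuous (posFlip g₁ g₂ hb₁) :=
  (Bmap_continuous g₁ g₂ hb₁).update (L m) ((continuous_apply (L m)).neg)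

lemma negFlip_apply_L (hb₂ : Cb₂ (H₁ := H₁) g₂) (y : Fin (m+1) → ℝ) :
    negFlip g₁ g₂ hb₂ y (L m) = -(y (L m)) := Function.update_self _ _ _

lemma posFlip_apply_L (hb₁ : Cb₁ (H₂ := H₂) g₁) (y : Fin (m+1) → ℝ) :
    posFlip g₁ g₂ hb₁ y (L m) = -(y (L m)) := Function.update_self _ _ _

lemma posFlip_negFlip (hb₁ : Cb₁ (H₂ := H₂) g₁) (hb₂ : Cb₂ (H₁ := H₁) g₂)
    (y : Fin (m+1) → ℝ) : posFlip g₁ g₂ hb₁ (negFlip g₁ g₂ hb₂ y) = y := by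
  have e1 : Bmap g₁ g₂ hb₁ (negFlip g₁ g₂ hb₂ y) = pr y := by
    rw [Bmap_congr g₁ g₂ hb₁
      (show pr (negFlip g₁ g₂ hb₂ y) = pr (Amap g₁ g₂ hb₂ y) from pr_update _ _),
      Bmap_Amap g₁ g₂ hb₁ hb₂]
  show Function.update (Bmap g₁ g₂ hb₁ (negFlip g₁ g₂ hb₂ y)) (L m)
      (-(negFlip g₁ g₂ hb₂ y (L m))) = y
  rw [e1, negFlip_apply_L, neg_neg]
  show Function.update (Function.update y (L m) 0) (L m) (y (L m)) = y
  rw [Function.update_idem, Function.update_eq_self]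

lemma negFlip_posFlip (hb₁ : Cb₁ (H₂ := H₂) g₁) (hb₂ : Cb₂ (H₁ := H₁) g₂)
    (y : Fin (m+1) → ℝ) : negFlip g₁ g₂ hb₂ (posFlip g₁ g₂ hb₁ y) = y := by
  have e1 : Amap g₁ g₂ hb₂ (posFlip g₁ g₂ hb₁ y) = pr y := by
    rw [Amap_congr g₁ g₂ hb₂
      (show pr (posFlip g₁ g₂ hb₁ y) = pr (Bmap g₁ g₂ hb₁ y) from pr_update _ _),
      Amap_Bmap g₁ g₂ hb₁ hb₂]
  show Function.update (Amap g₁ g₂ hb₂ (posFlip g₁ g₂ hb₁ y)) (L m)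
      (-(posFlip g₁ g₂ hb₁ y (L m))) = y
  rw [e1, posFlip_apply_L, neg_neg]
  show Function.update (Function.update y (L m) 0) (L m) (y (L m)) = y
  rw [Function.update_idem, Function.update_eq_self]

lemma negFlip_boundary (hb₁ : Cb₁ (H₂ := H₂) g₁) (hb₂ : Cb₂ (H₁ := H₁) g₂)
    (x : X) (hx : x ∈ H₁ ∩ H₂) :
    negFlip g₁ g₂ hb₂ (g₂ ⟨x, hx.2⟩ : Fin (m+1) → ℝ) = (g₁ ⟨x, hx.1⟩ : Fin (m+1) → ℝ) := by
  have hbdy : ((g₂ ⟨x, hx.2⟩ : ↥(Hpos (m+1))) : Fin (m+1) → ℝ) ∈ Hbd (m+1) := (hb₂ _).1 hx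
  have hL : ((g₂ ⟨x, hx.2⟩ : ↥(Hpos (m+1))) : Fin (m+1) → ℝ) (L m) = 0 := mem_Hbd.1 hbdy
  have hpr := pr_eq_self hbdy
  have hback : back₂ g₂ ((g₂ ⟨x, hx.2⟩ : ↥(Hpos (m+1))) : Fin (m+1) → ℝ) = ⟨x, hx.2⟩ := by
    rw [back₂]
    have hmk : (⟨pr ((g₂ ⟨x, hx.2⟩ : ↥(Hpos (m+1))) : Fin (m+1) → ℝ),
        Hbd_subset_Hpos (pr_mem_Hbd _)⟩ : ↥(Hpos (m+1))) = g₂ ⟨x, hx.2⟩ :=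
      Subtype.ext hpr
    rw [hmk, Homeomorph.symm_apply_apply]
  have hA : Amap g₁ g₂ hb₂ ((g₂ ⟨x, hx.2⟩ : ↥(Hpos (m+1))) : Fin (m+1) → ℝ)
      = (g₁ ⟨x, hx.1⟩ : Fin (m+1) → ℝ) := by
    have hmk2 : (⟨((back₂ g₂ ((g₂ ⟨x, hx.2⟩ : ↥(Hpos (m+1))) : Fin (m+1) → ℝ)) : X),
        (back₂_mem g₂ hb₂ _).1⟩ : ↥H₁) = ⟨x, hx.1⟩ := by
      apply Subtype.ext
      have h4 := congrArg Subtype.val hback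
      exact h4
    unfold Amap
    rw [hmk2]
  have h1bd : ((g₁ ⟨x, hx.1⟩ : ↥(Hpos (m+1))) : Fin (m+1) → ℝ) ∈ Hbd (m+1) := (hb₁ _).1 hx
  show Function.update (Amap g₁ g₂ hb₂ _) (L m) (-_) = _
  rw [hA, hL, neg_zero, ← mem_Hbd.1 h1bd, Function.update_eq_self]

lemma posFlip_mem_Hpos (hb₁ : Cb₁ (H₂ := H₂) g₁) {y : Fin (m+1) → ℝ}
    (hy : ¬ y ∈ Hpos (m+1)) : posFlip g₁ g₂ hb₁ y ∈ Hpos (m+1) := by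
  apply mem_Hpos.2
  rw [posFlip_apply_L]
  have h : ¬ 0 ≤ y (L m) := fun h => hy (mem_Hpos.2 h)
  linarith [not_le.1 h]

open Classical in
/-- The glued forward map. -/
noncomputable def Fmap (hb₂ : Cb₂ (H₁ := H₁) g₂) (hcov : H₁ ∪ H₂ = Set.univ)
    (x : X) : Fin (m+1) → ℝ :=
  if hx : x ∈ H₁ then (g₁ ⟨x, hx⟩ : Fin (m+1) → ℝ)
  else negFlip g₁ g₂ hb₂
    ((g₂ ⟨x, Or.resolve_left (hcov.ge (Set.mem_univ x)) hx⟩ : ↥(Hpos (m+1))) : Fin (m+1) → ℝ)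

open Classical in
/-- The glued inverse map. -/
noncomputable def Gmap (hb₁ : Cb₁ (H₂ := H₂) g₁) (y : Fin (m+1) → ℝ) : X :=
  if hy : y ∈ Hpos (m+1) then (g₁.symm ⟨y, hy⟩ : X)
  else (g₂.symm ⟨posFlip g₁ g₂ hb₁ y, posFlip_mem_Hpos g₁ g₂ hb₁ hy⟩ : X)

end Maps

/-- Gluing continuity over a closed cover. -/
lemma glue_closed {Y : Type*} [TopologicalSpace Y] {s t : Set X}
    {f : X → Y} (hs : IsClosed s) (ht : IsClosed t) (hcov : s ∪ t = Set.univ)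
    (h1 : ContinuousOn f s) (h2 : ContinuousOn f t) : Continuous f := by
  rw [continuous_iff_isClosed]
  intro C hC
  have h : f ⁻¹' C = (s ∩ f ⁻¹' C) ∪ (t ∩ f ⁻¹' C) := by
    rw [← Set.union_inter_distrib_right, hcov, Set.univ_inter]
  rw [h]
  exact (h1.preimage_isClosed_of_isClosed hs hC).union
    (h2.preimage_isClosed_of_isClosed ht hC)

end Stmt5Aux


open Stmt5Aux

/-- If a space is the union of two closed subsets, each homeomorphic to `ℍ^k` with the
intersection corresponding to the boundary on both sides, then the space is
homeomorphic to `ℝ^k` with the pieces going to the two half-spaces. -/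
theorem stmt5 (k : ℕ) (hk : 1 ≤ k) (X : Type) [TopologicalSpace X]
    (H₁ H₂ : Set X) (hc₁ : IsClosed H₁) (hc₂ : IsClosed H₂)
    (hcov : H₁ ∪ H₂ = Set.univ)
    (g₁ : ↥H₁ ≃ₜ ↥(Hpos k)) (g₂ : ↥H₂ ≃ₜ ↥(Hpos k))
    (hb₁ : ∀ y : ↥H₁, ((y : X) ∈ H₁ ∩ H₂ ↔ ((g₁ y : Fin k → ℝ) ∈ Hbd k)))
    (hb₂ : ∀ y : ↥H₂, ((y : X) ∈ H₁ ∩ H₂ ↔ ((g₂ y : Fin k → ℝ) ∈ Hbd k))) :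
    ∃ f : X ≃ₜ (Fin k → ℝ),
      (fun x => f x) '' H₁ = Hpos k ∧ (fun x => f x) '' H₂ = Hneg k := by
  obtain ⟨m, rfl⟩ : ∃ m, k = m + 1 := ⟨k - 1, (Nat.succ_pred_eq_of_pos hk).symm⟩
  classical
  -- abbreviations
  have hmem₂ : ∀ x : X, ¬ x ∈ H₁ → x ∈ H₂ := fun x hx =>
    Or.resolve_left (hcov.ge (Set.mem_univ x)) hx
  -- the glued maps
  let F : X → (Fin (m+1) → ℝ) := Fmap g₁ g₂ hb₂ hcov
  let G : (Fin (m+1) → ℝ) → X := Gmap g₁ g₂ hb₁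
  have Fpos : ∀ (x : X) (hx : x ∈ H₁), F x = ((g₁ ⟨x, hx⟩ : ↥(Hpos (m+1))) : Fin (m+1) → ℝ) :=
    fun x hx => dif_pos hx
  have Fneg' : ∀ (x : X) (hx : ¬ x ∈ H₁),
      F x = negFlip g₁ g₂ hb₂ ((g₂ ⟨x, hmem₂ x hx⟩ : ↥(Hpos (m+1))) : Fin (m+1) → ℝ) :=
    fun x hx => dif_neg hx
  have Fon₂ : ∀ (x : X) (hx : x ∈ H₂),
      F x = negFlip g₁ g₂ hb₂ ((g₂ ⟨x, hx⟩ : ↥(Hpos (m+1))) : Fin (m+1) → ℝ) := by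
    intro x hx
    by_cases hx1 : x ∈ H₁
    · rw [Fpos x hx1]
      exact (negFlip_boundary g₁ g₂ hb₁ hb₂ x ⟨hx1, hx⟩).symm
    · exact Fneg' x hx1
  have Gpos : ∀ (y : Fin (m+1) → ℝ) (hy : y ∈ Hpos (m+1)),
      G y = ((g₁.symm ⟨y, hy⟩ : ↥H₁) : X) := fun y hy => dif_pos hy
  have Gneg : ∀ (y : Fin (m+1) → ℝ) (hy : ¬ y ∈ Hpos (m+1)),
      G y = ((g₂.symm ⟨posFlip g₁ g₂ hb₁ y, posFlip_mem_Hpos g₁ g₂ hb₁ hy⟩ : ↥H₂) : X) :=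
    fun y hy => dif_neg hy
  have pfm : ∀ y ∈ Hneg (m+1), posFlip g₁ g₂ hb₁ y ∈ Hpos (m+1) := by
    intro y hy
    apply mem_Hpos.2
    rw [posFlip_apply_L]
    linarith [mem_Hneg.1 hy]
  have Gon_neg : ∀ (y : Fin (m+1) → ℝ) (hy : y ∈ Hneg (m+1)),
      G y = ((g₂.symm ⟨posFlip g₁ g₂ hb₁ y, pfm y hy⟩ : ↥H₂) : X) := by
    intro y hy
    by_cases h : y ∈ Hpos (m+1)
    · have hL : y (L m) = 0 := le_antisymm (mem_Hneg.1 hy) (mem_Hpos.1 h)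
      have hbd : y ∈ Hbd (m+1) := mem_Hbd.2 hL
      rw [Gpos y h]
      have h1 : posFlip g₁ g₂ hb₁ y = Bmap g₁ g₂ hb₁ y := by
        show Function.update (Bmap g₁ g₂ hb₁ y) (L m) (-(y (L m))) = _
        rw [hL, neg_zero, ← mem_Hbd.1 (Bmap_mem_Hbd g₁ g₂ hb₁ hb₂ y), Function.update_eq_self]
      have h2 : (⟨posFlip g₁ g₂ hb₁ y, pfm y hy⟩ : ↥(Hpos (m+1)))
          = g₂ ⟨(back₁ g₁ y : X), (back₁_mem g₁ hb₁ y).2⟩ := Subtype.ext h1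
      rw [h2, Homeomorph.symm_apply_apply]
      have h3 : (⟨pr y, Hbd_subset_Hpos (pr_mem_Hbd y)⟩ : ↥(Hpos (m+1))) = ⟨y, h⟩ :=
        Subtype.ext (pr_eq_self hbd)
      show ((g₁.symm ⟨y, h⟩ : ↥H₁) : X) = ((g₁.symm ⟨pr y, Hbd_subset_Hpos (pr_mem_Hbd y)⟩ : ↥H₁) : X)
      rw [h3]
    · exact Gneg y h
  -- continuity
  have Fcont : Continuous F := by
    apply glue_closed hc₁ hc₂ hcov
    · rw [continuousOn_iff_continuous_restrict]
      exact (continuous_subtype_val.comp g₁.continuous).congr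
        (fun z => (Fpos z z.2).symm)
    · rw [continuousOn_iff_continuous_restrict]
      exact ((negFlip_continuous g₁ g₂ hb₂).comp
        (continuous_subtype_val.comp g₂.continuous)).congr (fun z => (Fon₂ z z.2).symm)
  have isClosed_pos : IsClosed (Hpos (m+1)) := by
    have h : Hpos (m+1) = (fun y : Fin (m+1) → ℝ => y (L m)) ⁻¹' (Set.Ici 0) := by
      ext y; exact mem_Hpos
    rw [h]
    exact isClosed_Ici.preimage (continuous_apply _)
  have isClosed_neg : IsClosed (Hneg (m+1)) := by
    have h : Hneg (m+1) = (fun y : Fin (m+1) → ℝ => y (L m)) ⁻¹' (Set.Iic 0) := by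
      ext y; exact mem_Hneg
    rw [h]
    exact isClosed_Iic.preimage (continuous_apply _)
  have hcov' : Hpos (m+1) ∪ Hneg (m+1) = Set.univ :=
    Set.eq_univ_iff_forall.2 fun y =>
      (le_total 0 (y (L m))).elim (fun h => Or.inl (mem_Hpos.2 h))
        (fun h => Or.inr (mem_Hneg.2 h))
  have Gcont : Continuous G := by
    apply glue_closed isClosed_pos isClosed_neg hcov'
    · rw [continuousOn_iff_continuous_restrict]
      exact (continuous_subtype_val.comp g₁.symm.continuous).congr
        (fun z => (Gpos z z.2).symm)
    · rw [continuousOn_iff_continuous_restrict]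
      refine Continuous.congr ?_ (fun z => (Gon_neg z.1 z.2).symm)
      apply continuous_subtype_val.comp
      apply Homeomorph.continuous_symm g₂ |>.comp
      apply Continuous.subtype_mk
      exact (posFlip_continuous g₁ g₂ hb₁).comp continuous_subtype_val
  -- inverses
  have left_inv : ∀ x : X, G (F x) = x := by
    intro x
    by_cases hx : x ∈ H₁
    · have hp : ((g₁ ⟨x, hx⟩ : ↥(Hpos (m+1))) : Fin (m+1) → ℝ) ∈ Hpos (m+1) :=
        (g₁ ⟨x, hx⟩).2
      rw [Fpos x hx, Gpos _ hp]
      have h4 := congrArg Subtype.val (g₁.symm_apply_apply ⟨x, hx⟩)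
      exact h4
    · have hx2 := hmem₂ x hx
      have hwL : 0 < ((g₂ ⟨x, hx2⟩ : ↥(Hpos (m+1))) : Fin (m+1) → ℝ) (L m) := by
        rcases lt_or_eq_of_le (mem_Hpos.1 (g₂ ⟨x, hx2⟩).2) with h | h
        · exact h
        · exact absurd ((hb₂ ⟨x, hx2⟩).2 (mem_Hbd.2 h.symm)).1 hx
      have hnp : ¬ negFlip g₁ g₂ hb₂ ((g₂ ⟨x, hx2⟩ : ↥(Hpos (m+1))) : Fin (m+1) → ℝ)
          ∈ Hpos (m+1) := by
        intro h
        have := mem_Hpos.1 h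
        rw [negFlip_apply_L] at this
        linarith
      rw [Fneg' x hx, Gneg _ hnp]
      have h2 : (⟨posFlip g₁ g₂ hb₁ (negFlip g₁ g₂ hb₂
            ((g₂ ⟨x, hx2⟩ : ↥(Hpos (m+1))) : Fin (m+1) → ℝ)),
          posFlip_mem_Hpos g₁ g₂ hb₁ hnp⟩ : ↥(Hpos (m+1)))
          = g₂ ⟨x, hx2⟩ :=
        Subtype.ext (posFlip_negFlip g₁ g₂ hb₁ hb₂ _)
      rw [h2, Homeomorph.symm_apply_apply]
  have right_inv : ∀ y : Fin (m+1) → ℝ, F (G y) = y := by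
    intro y
    by_cases hy : y ∈ Hpos (m+1)
    · have hmem : ((g₁.symm ⟨y, hy⟩ : ↥H₁) : X) ∈ H₁ := (g₁.symm ⟨y, hy⟩).2
      rw [Gpos y hy, Fpos _ hmem]
      have h4 := congrArg Subtype.val (g₁.apply_symm_apply ⟨y, hy⟩)
      exact h4
    · have hyL : y (L m) < 0 := not_le.1 (fun h => hy (mem_Hpos.2 h))
      have hx1 : ¬ ((g₂.symm ⟨posFlip g₁ g₂ hb₁ y, posFlip_mem_Hpos g₁ g₂ hb₁ hy⟩ : ↥H₂) : X)
          ∈ H₁ := by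
        intro hmem
        have hbd := (hb₂ _).1 ⟨hmem, (g₂.symm ⟨posFlip g₁ g₂ hb₁ y,
          posFlip_mem_Hpos g₁ g₂ hb₁ hy⟩).2⟩
        rw [Homeomorph.apply_symm_apply] at hbd
        have h0 : posFlip g₁ g₂ hb₁ y (L m) = 0 := mem_Hbd.1 hbd
        rw [posFlip_apply_L] at h0
        linarith
      rw [Gneg y hy, Fneg' _ hx1]
      have h2 : (⟨((g₂.symm ⟨posFlip g₁ g₂ hb₁ y, posFlip_mem_Hpos g₁ g₂ hb₁ hy⟩ : ↥H₂) : X),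
          hmem₂ _ hx1⟩ : ↥H₂) = g₂.symm ⟨posFlip g₁ g₂ hb₁ y, posFlip_mem_Hpos g₁ g₂ hb₁ hy⟩ :=
        rfl
      rw [h2, Homeomorph.apply_symm_apply]
      exact negFlip_posFlip g₁ g₂ hb₁ hb₂ y
  -- assemble
  refine ⟨⟨⟨F, G, left_inv, right_inv⟩, Fcont, Gcont⟩, ?_, ?_⟩
  · apply Set.eq_of_subset_of_subset
    · rintro y ⟨x, hx, rfl⟩
      show F x ∈ Hpos (m+1)
      rw [Fpos x hx]
      exact (g₁ ⟨x, hx⟩).2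
    · intro y hy
      refine ⟨((g₁.symm ⟨y, hy⟩ : ↥H₁) : X), (g₁.symm ⟨y, hy⟩).2, ?_⟩
      show F _ = y
      rw [Fpos _ (g₁.symm ⟨y, hy⟩).2]
      have h4 := congrArg Subtype.val (g₁.apply_symm_apply ⟨y, hy⟩)
      exact h4
  · apply Set.eq_of_subset_of_subset
    · rintro y ⟨x, hx, rfl⟩
      show F x ∈ Hneg (m+1)
      rw [Fon₂ x hx]
      apply mem_Hneg.2
      rw [negFlip_apply_L]
      exact neg_nonpos.2 (mem_Hpos.1 (g₂ ⟨x, hx⟩).2)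
    · intro y hy
      have hGy : G y ∈ H₂ := by
        by_cases h : y ∈ Hpos (m+1)
        · rw [Gpos y h]
          have hbd : y ∈ Hbd (m+1) :=
            mem_Hbd.2 (le_antisymm (mem_Hneg.1 hy) (mem_Hpos.1 h))
          refine ((hb₁ (g₁.symm ⟨y, h⟩)).2 ?_).2
          rw [Homeomorph.apply_symm_apply]
          exact hbd
        · rw [Gneg y h]
          exact (g₂.symm _).2
      exact ⟨G y, hGy, right_inv y⟩
end

section
/- Let n ≥ 2 and, for each k with 2 ≤ k ≤ n, let σ_k be a sign string of length k. Then there exist subsets R₂ ⊆ R₃ ⊆ … ⊆ R_n = {1,…,n} with |R_k| = k for each k, such that for every k with 2 ≤ k ≤ n, writing R_k = {r₁ < r₂ < … < r_k}, one has σ_n(r_i) = σ_k(i) for all i ∈ {1,…,k}. -/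
open Classical in
noncomputable def signA (n : ℕ) (s : ℕ → ℕ → ℝ) : ℕ → ℕ
  | 0 => 0
  | d + 1 =>
      signA n s d +
        (if (signA n s d) % 2 = (if s (n - (d+1)) 0 = s n 0 then 0 else 1) then 0 else 1)

lemma signA_le (n : ℕ) (s : ℕ → ℕ → ℝ) : ∀ d, signA n s d ≤ d := by
  intro d; induction d with
  | zero => simp [signA]
  | succ d ih =>
    simp only [signA]
    split <;> (split <;> omega)

open Classical in
lemma signA_parity (n : ℕ) (s : ℕ → ℕ → ℝ) (d : ℕ) :
    signA n s d % 2 = (if s (n - d) 0 = s n 0 then 0 else 1) := by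
  cases d with
  | zero => simp [signA]
  | succ d =>
    simp only [signA]
    set c := (if s (n - (d+1)) 0 = s n 0 then 0 else 1) with hc
    have hc01 : c = 0 ∨ c = 1 := by rw [hc]; split <;> simp
    split <;> omega

lemma sign_eval {m : ℕ} {t : ℕ → ℝ} (h : IsSignString m t) :
    ∀ j, j < m → t j = (-1 : ℝ)^j * t 0 := by
  intro j hj
  induction j with
  | zero => simp
  | succ i ih =>
    rw [h.2.2 i hj, ih (by omega)]
    ring

/-- Given sign strings `σ_k` of length `k` for `2 ≤ k ≤ n`, there are nested subsets
`R₂ ⊆ … ⊆ R_n = {1,…,n}` with `|R_k| = k` such that, enumerating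
`R_k = {r₁ < … < r_k}`, one has `σ_n(r_i) = σ_k(i)` for all `i`. (Here `s k` is the
0-indexed version of `σ_k` and elements of `Fin n` correspond to paper indices shifted
down by one.) -/
theorem stmt13 (n : ℕ) (hn : 2 ≤ n) (s : ℕ → ℕ → ℝ)
    (hs : ∀ k, 2 ≤ k → k ≤ n → IsSignString k (s k)) :
    ∃ R : ℕ → Finset (Fin n),
      (∀ k, 2 ≤ k → k ≤ n → (R k).card = k) ∧
      (∀ k, 2 ≤ k → k < n → R k ⊆ R (k + 1)) ∧
      R n = Finset.univ ∧
      ∀ k, 2 ≤ k → k ≤ n → ∃ r : ℕ → Fin n,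
        (∀ i j, i < j → j < k → r i < r j) ∧
        (∀ j : Fin n, j ∈ R k ↔ ∃ i < k, r i = j) ∧
        ∀ i < k, s n (r i).val = s k i := by
  classical
  have hn0 : 0 < n := by omega
  set a : ℕ → ℕ := fun k => signA n s (n - k) with ha
  have hale : ∀ k, a k ≤ n - k := fun k => signA_le n s (n - k)
  have hbound : ∀ k, ∀ i, i < k → k ≤ n → a k + i < n := by
    intro k i hi hk; have := hale k; omega
  have hstep : ∀ k, k < n → a (k+1) ≤ a k ∧ a k ≤ a (k+1) + 1 := by
    intro k hk
    have hd : n - k = (n - (k+1)) + 1 := by omega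
    have h1 : a k = signA n s ((n - (k+1)) + 1) := by rw [ha]; simp only; rw [hd]
    have h2 : a (k+1) = signA n s (n - (k+1)) := rfl
    rw [h1, h2, signA]
    constructor <;> (split <;> (split <;> omega))
  have haP : ∀ k, k ≤ n → a k % 2 = (if s k 0 = s n 0 then 0 else 1) := by
    intro k hk
    have := signA_parity n s (n - k)
    rwa [show n - (n - k) = k by omega] at this
  set r : ℕ → ℕ → Fin n := fun k i => (⟨(a k + i) % n, Nat.mod_lt _ hn0⟩ : Fin n) with hr
  have hrval : ∀ k i, i < k → k ≤ n → (r k i).val = a k + i := by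
    intro k i hi hk
    exact Nat.mod_eq_of_lt (hbound k i hi hk)
  set R : ℕ → Finset (Fin n) := fun k => (Finset.range k).image (r k) with hR
  refine ⟨R, ?_, ?_, ?_, ?_⟩
  · -- cardinality
    intro k h2 hk
    rw [hR]
    rw [Finset.card_image_of_injOn, Finset.card_range]
    intro i1 h1 i2 h2' he
    simp only [Finset.coe_range, Set.mem_Iio] at h1 h2'
    have e1 := hrval k i1 h1 hk
    have e2 := hrval k i2 h2' hk
    have : (r k i1).val = (r k i2).val := by rw [he]
    omega
  · -- nested
    intro k h2 hk
    intro j hj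
    simp only [hR, Finset.mem_image, Finset.mem_range] at hj ⊢
    obtain ⟨i, hi, hij⟩ := hj
    obtain ⟨hs1, hs2⟩ := hstep k hk
    refine ⟨a k + i - a (k+1), by omega, ?_⟩
    have e1 := hrval k i hi (by omega)
    have e2 := hrval (k+1) (a k + i - a (k+1)) (by omega) (by omega)
    rw [← hij]
    apply Fin.ext
    omega
  · -- R n = univ
    apply Finset.eq_univ_iff_forall.mpr
    intro j
    simp only [hR, Finset.mem_image, Finset.mem_range]
    refine ⟨j.val, j.isLt, ?_⟩
    have han : a n = 0 := by rw [ha]; simp [signA]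
    have := hrval n j.val j.isLt le_rfl
    apply Fin.ext
    omega
  · -- enumeration and sign condition
    intro k h2 hk
    refine ⟨r k, ?_, ?_, ?_⟩
    · intro i j hij hjk
      have e1 := hrval k i (by omega) hk
      have e2 := hrval k j hjk hk
      show (r k i).val < (r k j).val
      omega
    · intro j
      simp only [hR, Finset.mem_image, Finset.mem_range]
    · intro i hi
      have hrv := hrval k i hi hk
      rw [hrv]
      have hsn := hs n (by omega) le_rfl
      have hsk := hs k h2 hk
      rw [sign_eval hsn _ (hbound k i hi hk), sign_eval hsk _ hi]
      have hpar := haP k hk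
      by_cases hE : s k 0 = s n 0
      · rw [if_pos hE] at hpar
        have hev : Even (a k) := Nat.even_iff.mpr hpar
        rw [pow_add, hev.neg_one_pow, hE]
        ring
      · rw [if_neg hE] at hpar
        have hod : Odd (a k) := Nat.odd_iff.mpr hpar
        have hk0 := hsk.2.1 0 (by omega)
        have hn0' := hsn.2.1 0 (by omega)
        have : s k 0 = - s n 0 := by
          rcases hk0 with h | h <;> rcases hn0' with h' | h' <;>
            rw [h, h'] at hE ⊢ <;> first | exact absurd rfl hE | norm_num
        rw [pow_add, hod.neg_one_pow, this]
        ring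
end

section
/- Assume |Φ(r₀) − Φ(r_b)| ≤ κ₀·b for some b > 0, let c ≥ b, and let μ be a real number with λ₋(b) ≤ μ ≤ λ₊(b). Then also λ₋(c) ≤ μ ≤ λ₊(c), and: (a) ∫₀^c ζ_{(μ,c)}(x) dx − ∫₀^b ζ_{(μ,b)}(x) dx = μ·(c − b); (b) the set { x ∈ [0,c] : ζ_{(μ,c)}(x) = μ } is a nonempty closed interval of length at least c − b. -/
open MeasureTheory

/-- The increasing bijection `Φ : ℝ → (−1,1)`, `Φ(u) = u/√(1+u²)`. -/
noncomputable def Phi (u : ℝ) : ℝ := u / Real.sqrt (1 + u ^ 2)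

/-- The inverse `Ψ : (−1,1) → ℝ` of `Φ`, `Ψ(v) = v/√(1−v²)`. -/
noncomputable def Psi (v : ℝ) : ℝ := v / Real.sqrt (1 - v ^ 2)

/-- `g₊`: the solution of `g' = κ₀(1+g²)^{3/2}`, `g(0) = r₀`, with value `+∞` after
blow-up. -/
noncomputable def gp (κ₀ r₀ : ℝ) (x : ℝ) : EReal :=
  if Phi r₀ + κ₀ * x < 1 then ((Psi (Phi r₀ + κ₀ * x) : ℝ) : EReal) else ⊤

/-- `g₋`: the solution of `g' = −κ₀(1+g²)^{3/2}`, `g(0) = r₀`, with value `−∞` after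
blow-up. -/
noncomputable def gm (κ₀ r₀ : ℝ) (x : ℝ) : EReal :=
  if -1 < Phi r₀ - κ₀ * x then ((Psi (Phi r₀ - κ₀ * x) : ℝ) : EReal) else ⊥

/-- `h₊^c`: the solution of `h' = −κ₀(1+h²)^{3/2}`, `h(c) = r_b`, with value `+∞`
before blow-up. -/
noncomputable def hp (κ₀ rb : ℝ) (c : ℝ) (x : ℝ) : EReal :=
  if Phi rb + κ₀ * (c - x) < 1 then ((Psi (Phi rb + κ₀ * (c - x)) : ℝ) : EReal) else ⊤

/-- `h₋^c`: the solution of `h' = κ₀(1+h²)^{3/2}`, `h(c) = r_b`, with value `−∞`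
before blow-up. -/
noncomputable def hm (κ₀ rb : ℝ) (c : ℝ) (x : ℝ) : EReal :=
  if -1 < Phi rb - κ₀ * (c - x) then ((Psi (Phi rb - κ₀ * (c - x)) : ℝ) : EReal) else ⊥

/-- `λ₊(c)`, the level at which the graphs of `g₊` and `h₊^c` intersect (`+∞` if they
do not). -/
noncomputable def lamP (κ₀ r₀ rb : ℝ) (c : ℝ) : EReal :=
  if (Phi r₀ + Phi rb + κ₀ * c) / 2 < 1 then
    ((Psi ((Phi r₀ + Phi rb + κ₀ * c) / 2) : ℝ) : EReal) else ⊤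

/-- `λ₋(c)`, the level at which the graphs of `g₋` and `h₋^c` intersect (`−∞` if they
do not). -/
noncomputable def lamM (κ₀ r₀ rb : ℝ) (c : ℝ) : EReal :=
  if -1 < (Phi r₀ + Phi rb - κ₀ * c) / 2 then
    ((Psi ((Phi r₀ + Phi rb - κ₀ * c) / 2) : ℝ) : EReal) else ⊥

/-- The median (third smallest) of five extended reals, as the max over 3-element
subsets of their min. -/
noncomputable def med5 (a b c d e : EReal) : EReal :=
  (a ⊓ b ⊓ c) ⊔ (a ⊓ b ⊓ d) ⊔ (a ⊓ b ⊓ e) ⊔ (a ⊓ c ⊓ d) ⊔ (a ⊓ c ⊓ e) ⊔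
    (a ⊓ d ⊓ e) ⊔ (b ⊓ c ⊓ d) ⊔ (b ⊓ c ⊓ e) ⊔ (b ⊓ d ⊓ e) ⊔ (c ⊓ d ⊓ e)

/-- `ζ_{(μ,c)}(x)`: the median of `h₋^c(x), g₋(x), μ, g₊(x), h₊^c(x)` (a real number
whenever `λ₋(c) ≤ μ ≤ λ₊(c)`). -/
noncomputable def zeta (κ₀ r₀ rb : ℝ) (μ c : ℝ) (x : ℝ) : ℝ :=
  (med5 (hm κ₀ rb c x) (gm κ₀ r₀ x) ((μ : ℝ) : EReal) (gp κ₀ r₀ x)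
    (hp κ₀ rb c x)).toReal

/-! In the coordinate `Φ` the five curves become the lines `A ± κ₀x` and `B ± κ₀(c - x)`, where
`A = Φ r₀` and `B = Φ r_b`, and `Φ ∘ ζ_{(μ,c)}` is `Φ μ` clamped between the lower envelope
`max (A - κ₀x) (B - κ₀(c - x))` and the upper envelope `min (A + κ₀x) (B + κ₀(c - x))`. The clamp
equals `Φ μ` exactly on `[|A - Φ μ|/κ₀, c - |B - Φ μ|/κ₀]`, whose length is at least `c - b` because
`|A - Φ μ| + |B - Φ μ| ≤ κ₀b` for `μ ∈ [λ₋(b), λ₊(b)]`. Left of this plateau only the curves through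
`r₀` matter and right of it only those through `r_b`, so passing from `b` to `c` just lengthens the
plateau by `c - b`, adding `μ (c - b)` to the integral. -/

open Real Set

lemma phi_eq_tanh_arsinh (u : ℝ) : Phi u = tanh (arsinh u) := by
  rw [Phi, tanh_eq_sinh_div_cosh, sinh_arsinh, cosh_arsinh]

lemma psi_eq_sinh_artanh {v : ℝ} (hv : v ∈ Ioo (-1) 1) : Psi v = sinh (artanh v) :=
  (sinh_artanh hv).symm

lemma phi_mem_Ioo (u : ℝ) : Phi u ∈ Ioo (-1) 1 := by
  rw [phi_eq_tanh_arsinh]; exact ⟨neg_one_lt_tanh _, tanh_lt_one _⟩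

lemma psi_phi (u : ℝ) : Psi (Phi u) = u := by
  rw [psi_eq_sinh_artanh (phi_mem_Ioo u), phi_eq_tanh_arsinh, artanh_tanh, sinh_arsinh]

lemma strictMonoOn_psi : StrictMonoOn Psi (Ioo (-1) 1) := fun v hv w hw hvw => by
  rw [psi_eq_sinh_artanh hv, psi_eq_sinh_artanh hw]
  exact sinh_strictMono (strictMonoOn_artanh hv hw hvw)

lemma continuousOn_psi : ContinuousOn Psi (Ioo (-1) 1) := by
  refine continuousOn_id.div (by fun_prop) fun v hv => ?_
  have : v ^ 2 < 1 := by nlinarith [hv.1, hv.2]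
  positivity

lemma med5_eq_of_le {a b m d e : EReal} (had : a ≤ d) (hae : a ≤ e) (hbd : b ≤ d)
    (hbe : b ≤ e) : med5 a b m d e = a ⊔ b ⊔ (m ⊓ d ⊓ e) := by
  apply le_antisymm
  -- every term but the last contains `a` or `b`
  · refine sup_le (sup_le (sup_le (sup_le (sup_le (sup_le (sup_le (sup_le (sup_le ?_ ?_) ?_) ?_)
      ?_) ?_) ?_) ?_) ?_) le_sup_right <;>
    exact (inf_le_left.trans inf_le_left).trans (le_sup_of_le_left (by simp))
  · refine sup_le (sup_le ?_ ?_) ?_ <;>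
    simp [med5, le_sup_iff, had, hae, hbd, hbe]

/-- `g₊, g₋, h₊^c, h₋^c` are the values of this monotone extension of `Ψ` along the lines
`Φ r₀ ± κ₀x`, `Φ r_b ± κ₀(c - x)`, so the median defining `ζ` commutes with it. -/
noncomputable def extPsi (v : ℝ) : EReal :=
  if v ≤ -1 then ⊥ else if v < 1 then (Psi v : EReal) else ⊤

lemma extPsi_of_mem_Ioo {v : ℝ} (hv : v ∈ Ioo (-1) 1) : extPsi v = Psi v := by
  simp [extPsi, not_le.2 hv.1, hv.2]

lemma monotone_extPsi : Monotone extPsi := by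
  intro v w hvw
  unfold extPsi
  split_ifs <;> first
    | exact bot_le | exact le_top | linarith
    | exact EReal.coe_le_coe_iff.2 (strictMonoOn_psi.monotoneOn ⟨by linarith, by linarith⟩
        ⟨by linarith, by linarith⟩ hvw)

lemma ite_lt_one_eq_extPsi {v : ℝ} (hv : -1 < v) :
    (if v < 1 then (Psi v : EReal) else ⊤) = extPsi v := by
  unfold extPsi; split_ifs <;> first | rfl | linarith

lemma ite_neg_one_lt_eq_extPsi {v : ℝ} (hv : v < 1) :
    (if -1 < v then (Psi v : EReal) else ⊥) = extPsi v := by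
  unfold extPsi; split_ifs <;> first | rfl | linarith

/-- `Φ ∘ ζ_{(μ,c)}` on `[0, c]` when `|Φ r₀ - Φ r_b| ≤ κ₀c`, with `A = Φ r₀`, `B = Φ r_b`,
`m = Φ μ`. -/
noncomputable def phiZeta (A B m κ c x : ℝ) : ℝ :=
  max (max (B - κ * (c - x)) (A - κ * x)) (min (min m (A + κ * x)) (B + κ * (c - x)))

section phiZeta

variable {A B m κ c x : ℝ}

lemma continuous_phiZeta : Continuous (phiZeta A B m κ c) := by
  unfold phiZeta; fun_prop

lemma phiZeta_mem_Ioo (hA : A ∈ Ioo (-1) 1) (hB : B ∈ Ioo (-1) 1) (hm : m ∈ Ioo (-1) 1)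
    (hκ : 0 ≤ κ) (hx : x ∈ Icc 0 c) : phiZeta A B m κ c x ∈ Ioo (-1) 1 := by
  have h1 : 0 ≤ κ * x := mul_nonneg hκ hx.1
  have h2 : 0 ≤ κ * (c - x) := mul_nonneg hκ (sub_nonneg.2 hx.2)
  simp only [phiZeta, mem_Ioo, lt_max_iff, max_lt_iff, lt_min_iff, min_lt_iff]
  refine ⟨Or.inr ⟨⟨hm.1, ?_⟩, ?_⟩, ⟨?_, ?_⟩, Or.inl (Or.inl hm.2)⟩ <;>
    linarith [hA.1, hA.2, hB.1, hB.2]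

lemma phiZeta_eq_iff (hκ : 0 ≤ κ) (hx : x ∈ Icc 0 c) (hAB : |A - B| ≤ κ * c) :
    phiZeta A B m κ c x = m ↔ |A - m| ≤ κ * x ∧ |B - m| ≤ κ * (c - x) := by
  have h1 : 0 ≤ κ * x := mul_nonneg hκ hx.1
  have h2 : 0 ≤ κ * (c - x) := mul_nonneg hκ (sub_nonneg.2 hx.2)
  rw [abs_le] at hAB
  simp only [phiZeta, abs_le, max_def, min_def]
  split_ifs <;> constructor <;> intros <;> (try constructor) <;> (try constructor) <;> linarith

lemma phiZeta_eq_of_abs_sub_le_right (hBm : |B - m| ≤ κ * (c - x)) (hBA : B - A ≤ κ * c) :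
    phiZeta A B m κ c x = max (A - κ * x) (min m (A + κ * x)) := by
  rw [abs_le] at hBm
  simp only [phiZeta, max_def, min_def]
  split_ifs <;> linarith

lemma phiZeta_eq_of_abs_sub_le_left (hAm : |A - m| ≤ κ * x) (hAB : A - B ≤ κ * c) :
    phiZeta A B m κ c x = max (B - κ * (c - x)) (min m (B + κ * (c - x))) := by
  rw [abs_le] at hAm
  simp only [phiZeta, max_def, min_def]
  split_ifs <;> linarith

end phiZeta

lemma IntervalIntegrable.mono_set_of_le {E : Type*} [NormedAddCommGroup E] {f : ℝ → E}
    {μ : Measure ℝ} {a b s t : ℝ} (hf : IntervalIntegrable f μ a b) (has : a ≤ s) (hst : s ≤ t)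
    (htb : t ≤ b) : IntervalIntegrable f μ s t :=
  hf.mono_set (uIcc_subset_uIcc (mem_uIcc_of_le has (hst.trans htb))
    (mem_uIcc_of_le (has.trans hst) htb))

theorem intervalIntegral_eq_add_plateau {f g : ℝ → ℝ} {a v b d μ : ℝ} (hv : v ∈ Icc a b)
    (hd : 0 ≤ d) (hf : IntervalIntegrable f volume a (b + d))
    (hg : IntervalIntegrable g volume a b) (hleft : EqOn f g (Icc a v))
    (hmid : EqOn f (fun _ => μ) (Icc v (v + d))) (hright : ∀ x ∈ Icc v b, f (x + d) = g x) :
    ∫ x in a..b + d, f x = (∫ x in a..b, g x) + d * μ := by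
  obtain ⟨hav, hvb⟩ := hv
  have hsplit_f : ∫ x in a..b + d, f x =
      (∫ x in a..v, f x) + (∫ x in v..v + d, f x) + ∫ x in v + d..b + d, f x := by
    rw [intervalIntegral.integral_add_adjacent_intervals
        (hf.mono_set_of_le le_rfl hav (by linarith))
        (hf.mono_set_of_le hav (by linarith) (by linarith)),
      intervalIntegral.integral_add_adjacent_intervals
        (hf.mono_set_of_le le_rfl (by linarith) (by linarith))
        (hf.mono_set_of_le (by linarith) (by linarith) le_rfl)]
  have hsplit_g : ∫ x in a..b, g x = (∫ x in a..v, g x) + ∫ x in v..b, g x :=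
    (intervalIntegral.integral_add_adjacent_intervals (hg.mono_set_of_le le_rfl hav hvb)
      (hg.mono_set_of_le hav hvb le_rfl)).symm
  have h_left : ∫ x in a..v, f x = ∫ x in a..v, g x :=
    intervalIntegral.integral_congr (by rwa [uIcc_of_le hav])
  have h_mid : ∫ x in v..v + d, f x = d * μ := by
    rw [intervalIntegral.integral_congr (by rwa [uIcc_of_le (by linarith)]),
      intervalIntegral.integral_const, add_sub_cancel_left, smul_eq_mul]
  have h_right : ∫ x in v + d..b + d, f x = ∫ x in v..b, g x := by
    rw [← intervalIntegral.integral_comp_add_right]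
    exact intervalIntegral.integral_congr (by rw [uIcc_of_le hvb]; exact hright)
  rw [hsplit_f, hsplit_g, h_left, h_mid, h_right]
  ring

section zeta

variable {κ r₀ rb μ b c x : ℝ}

lemma zeta_eq_psi_phiZeta (hκ : 0 ≤ κ) (hx : x ∈ Icc 0 c) (hAB : |Phi r₀ - Phi rb| ≤ κ * c) :
    zeta κ r₀ rb μ c x = Psi (phiZeta (Phi r₀) (Phi rb) (Phi μ) κ c x) := by
  have hA := phi_mem_Ioo r₀
  have hB := phi_mem_Ioo rb
  have h1 : 0 ≤ κ * x := mul_nonneg hκ hx.1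
  have h2 : 0 ≤ κ * (c - x) := mul_nonneg hκ (sub_nonneg.2 hx.2)
  rw [abs_le] at hAB
  have hμ : (μ : EReal) = extPsi (Phi μ) := by rw [extPsi_of_mem_Ioo (phi_mem_Ioo μ), psi_phi]
  unfold zeta gp gm hp hm
  rw [ite_lt_one_eq_extPsi (by linarith [hA.1]), ite_lt_one_eq_extPsi (by linarith [hB.1]),
    ite_neg_one_lt_eq_extPsi (by linarith [hB.2]), ite_neg_one_lt_eq_extPsi (by linarith [hA.2]),
    hμ, med5_eq_of_le (monotone_extPsi (by linarith)) (monotone_extPsi (by linarith))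
      (monotone_extPsi (by linarith)) (monotone_extPsi (by linarith))]
  simp only [← monotone_extPsi.map_max, ← monotone_extPsi.map_min]
  rw [← phiZeta, extPsi_of_mem_Ioo (phiZeta_mem_Ioo hA hB (phi_mem_Ioo μ) hκ hx),
    EReal.toReal_coe]

lemma zeta_eq_self_iff (hκ : 0 ≤ κ) (hx : x ∈ Icc 0 c) (hAB : |Phi r₀ - Phi rb| ≤ κ * c) :
    zeta κ r₀ rb μ c x = μ ↔
      |Phi r₀ - Phi μ| ≤ κ * x ∧ |Phi rb - Phi μ| ≤ κ * (c - x) := by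
  rw [zeta_eq_psi_phiZeta hκ hx hAB, ← phiZeta_eq_iff hκ hx hAB]
  have := strictMonoOn_psi.injOn.eq_iff
    (phiZeta_mem_Ioo (phi_mem_Ioo r₀) (phi_mem_Ioo rb) (phi_mem_Ioo μ) hκ hx) (phi_mem_Ioo μ)
  rwa [psi_phi] at this

lemma setOf_zeta_eq_self (hκ : 0 < κ) (hAB : |Phi r₀ - Phi rb| ≤ κ * c) :
    {x ∈ Icc 0 c | zeta κ r₀ rb μ c x = μ} =
      Icc (|Phi r₀ - Phi μ| / κ) (c - |Phi rb - Phi μ| / κ) := by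
  ext x
  have hw : x ≤ c - |Phi rb - Phi μ| / κ ↔ |Phi rb - Phi μ| ≤ κ * (c - x) :=
    le_sub_comm.trans (div_le_iff₀' hκ)
  simp only [mem_ofPred_eq, mem_Icc, div_le_iff₀' hκ, hw]
  constructor
  · rintro ⟨hx, hζ⟩
    exact (zeta_eq_self_iff hκ.le hx hAB).1 hζ
  · rintro ⟨hAm, hBm⟩
    have hx : x ∈ Icc 0 c := ⟨by nlinarith [abs_nonneg (Phi r₀ - Phi μ)],
      by nlinarith [abs_nonneg (Phi rb - Phi μ)]⟩
    exact ⟨hx, (zeta_eq_self_iff hκ.le hx hAB).2 ⟨hAm, hBm⟩⟩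

lemma intervalIntegrable_zeta (hκ : 0 ≤ κ) (hc : 0 ≤ c) (hAB : |Phi r₀ - Phi rb| ≤ κ * c) :
    IntervalIntegrable (zeta κ r₀ rb μ c) volume 0 c := by
  refine ContinuousOn.intervalIntegrable ?_
  rw [uIcc_of_le hc]
  refine ContinuousOn.congr ?_ fun x hx => zeta_eq_psi_phiZeta hκ hx hAB
  exact continuousOn_psi.comp continuous_phiZeta.continuousOn fun x hx =>
    phiZeta_mem_Ioo (phi_mem_Ioo r₀) (phi_mem_Ioo rb) (phi_mem_Ioo μ) hκ hx

lemma integral_zeta_sub_integral_zeta (hκ : 0 < κ)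
    (hsum : |Phi r₀ - Phi μ| + |Phi rb - Phi μ| ≤ κ * b) (hbc : b ≤ c) :
    (∫ x in 0..c, zeta κ r₀ rb μ c x) - (∫ x in 0..b, zeta κ r₀ rb μ b x) = μ * (c - b) := by
  set A := Phi r₀
  set B := Phi rb
  set m := Phi μ
  have hAB : |A - B| ≤ κ * b := (abs_sub_le A m B).trans (by rwa [abs_sub_comm m B])
  have hb : 0 ≤ b := (mul_nonneg_iff_of_pos_left hκ).1 ((abs_nonneg _).trans hAB)
  have hκbc : κ * b ≤ κ * c := by gcongr
  have hABc : |A - B| ≤ κ * c := hAB.trans hκbc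
  obtain ⟨hBA_le, hAB_le⟩ := abs_le.1 hAB
  set u := |A - m| / κ
  set w := |B - m| / κ
  have hu : ∀ y, u ≤ y ↔ |A - m| ≤ κ * y := fun y => div_le_iff₀' hκ
  have hw : ∀ y, w ≤ y ↔ |B - m| ≤ κ * y := fun y => div_le_iff₀' hκ
  have huw : u + w ≤ b := by rw [← add_div, div_le_iff₀' hκ]; exact hsum
  have hu0 : 0 ≤ u := by positivity
  have hw0 : 0 ≤ w := by positivity
  have hleft : EqOn (zeta κ r₀ rb μ c) (zeta κ r₀ rb μ b) (Icc 0 (b - w)) := fun x hx => by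
    rw [zeta_eq_psi_phiZeta hκ.le ⟨hx.1, by linarith [hx.2]⟩ hABc,
      zeta_eq_psi_phiZeta hκ.le ⟨hx.1, by linarith [hx.2]⟩ hAB,
      phiZeta_eq_of_abs_sub_le_right ((hw _).1 (by linarith [hx.2])) (by linarith),
      phiZeta_eq_of_abs_sub_le_right ((hw _).1 (by linarith [hx.2])) (by linarith)]
  have hmid : EqOn (zeta κ r₀ rb μ c) (fun _ => μ) (Icc (b - w) (b - w + (c - b))) :=
    fun x hx => (zeta_eq_self_iff hκ.le ⟨by linarith [hx.1], by linarith [hx.2]⟩ hABc).2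
      ⟨(hu x).1 (by linarith [hx.1]), (hw _).1 (by linarith [hx.2])⟩
  have hright : ∀ x ∈ Icc (b - w) b, zeta κ r₀ rb μ c (x + (c - b)) = zeta κ r₀ rb μ b x := by
    intro x hx
    rw [zeta_eq_psi_phiZeta hκ.le ⟨by linarith [hx.1], by linarith [hx.2]⟩ hABc,
      zeta_eq_psi_phiZeta hκ.le ⟨by linarith [hx.1], hx.2⟩ hAB,
      phiZeta_eq_of_abs_sub_le_left ((hu _).1 (by linarith [hx.1])) (by linarith),
      phiZeta_eq_of_abs_sub_le_left ((hu _).1 (by linarith [hx.1])) (by linarith),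
      show c - (x + (c - b)) = b - x by ring]
  have hplateau := intervalIntegral_eq_add_plateau ⟨by linarith, by linarith⟩ (sub_nonneg.2 hbc)
    (by rw [add_sub_cancel]; exact intervalIntegrable_zeta hκ.le (hb.trans hbc) hABc)
    (intervalIntegrable_zeta hκ.le hb hAB) hleft hmid hright
  rw [add_sub_cancel] at hplateau
  rw [hplateau]
  ring

end zeta

section lam

variable {κ r₀ rb μ c : ℝ}

lemma lamM_le_iff (hκc : 0 ≤ κ * c) :
    lamM κ r₀ rb c ≤ μ ↔ Phi r₀ + Phi rb - κ * c ≤ 2 * Phi μ := by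
  have hA := phi_mem_Ioo r₀
  have hB := phi_mem_Ioo rb
  have hm := phi_mem_Ioo μ
  unfold lamM
  split_ifs with h
  · have hs : (Phi r₀ + Phi rb - κ * c) / 2 ∈ Ioo (-1) 1 := ⟨h, by linarith [hA.2, hB.2]⟩
    rw [EReal.coe_le_coe_iff, ← psi_phi μ, strictMonoOn_psi.le_iff_le hs hm, psi_phi]
    constructor <;> intro <;> linarith
  · simp only [bot_le, true_iff]
    linarith [hm.1]

lemma le_lamP_iff (hκc : 0 ≤ κ * c) :
    μ ≤ lamP κ r₀ rb c ↔ 2 * Phi μ ≤ Phi r₀ + Phi rb + κ * c := by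
  have hA := phi_mem_Ioo r₀
  have hB := phi_mem_Ioo rb
  have hm := phi_mem_Ioo μ
  unfold lamP
  split_ifs with h
  · have hs : (Phi r₀ + Phi rb + κ * c) / 2 ∈ Ioo (-1) 1 := ⟨by linarith [hA.1, hB.1], h⟩
    rw [EReal.coe_le_coe_iff, ← psi_phi μ, strictMonoOn_psi.le_iff_le hm hs, psi_phi]
    constructor <;> intro <;> linarith
  · simp only [le_top, true_iff]
    linarith [hm.2]

end lam

theorem stmt16_general (κ₀ r₀ rb b c μ : ℝ) (hκ : κ₀ ∈ Set.Ioo (0 : ℝ) 1)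
    (hcompat : |Phi r₀ - Phi rb| ≤ κ₀ * b) (hbc : b ≤ c)
    (h₁ : lamM κ₀ r₀ rb b ≤ (μ : EReal)) (h₂ : (μ : EReal) ≤ lamP κ₀ r₀ rb b) :
    (lamM κ₀ r₀ rb c ≤ (μ : EReal) ∧ (μ : EReal) ≤ lamP κ₀ r₀ rb c) ∧
    ((∫ x in (0 : ℝ)..c, zeta κ₀ r₀ rb μ c x) -
        (∫ x in (0 : ℝ)..b, zeta κ₀ r₀ rb μ b x) = μ * (c - b)) ∧
    ∃ u v : ℝ, u ≤ v ∧ c - b ≤ v - u ∧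
      {x ∈ Set.Icc (0 : ℝ) c | zeta κ₀ r₀ rb μ c x = μ} = Set.Icc u v := by
  have hκ₀ : 0 < κ₀ := hκ.1
  have hκb : 0 ≤ κ₀ * b := (abs_nonneg _).trans hcompat
  have hκbc : κ₀ * b ≤ κ₀ * c := by gcongr
  have hlo := (lamM_le_iff hκb).1 h₁
  have hhi := (le_lamP_iff hκb).1 h₂
  have hsum : |Phi r₀ - Phi μ| + |Phi rb - Phi μ| ≤ κ₀ * b := by
    have := abs_le.1 hcompat
    cases abs_cases (Phi r₀ - Phi μ) <;> cases abs_cases (Phi rb - Phi μ) <;> linarith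
  have hlen : |Phi r₀ - Phi μ| / κ₀ + |Phi rb - Phi μ| / κ₀ ≤ b := by
    rw [← add_div, div_le_iff₀' hκ₀]; exact hsum
  refine ⟨⟨(lamM_le_iff (hκb.trans hκbc)).2 (by linarith),
    (le_lamP_iff (hκb.trans hκbc)).2 (by linarith)⟩,
    integral_zeta_sub_integral_zeta hκ₀ hsum hbc,
    _, _, by linarith, by linarith, setOf_zeta_eq_self hκ₀ (hcompat.trans hκbc)⟩

/-- For `c ≥ b` and real `μ ∈ [λ₋(b), λ₊(b)]`: also `μ ∈ [λ₋(c), λ₊(c)]`;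
(a) `∫₀^c ζ_{(μ,c)} − ∫₀^b ζ_{(μ,b)} = μ(c−b)`; and (b) `{x ∈ [0,c] : ζ_{(μ,c)}(x) = μ}`
is a nonempty closed interval of length at least `c − b`. -/
theorem stmt16 (κ₀ r₀ rb b c μ : ℝ) (hκ : κ₀ ∈ Set.Ioo (0 : ℝ) 1) (hb : 0 < b)
    (hcompat : |Phi r₀ - Phi rb| ≤ κ₀ * b) (hbc : b ≤ c)
    (h₁ : lamM κ₀ r₀ rb b ≤ (μ : EReal)) (h₂ : (μ : EReal) ≤ lamP κ₀ r₀ rb b) :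
    (lamM κ₀ r₀ rb c ≤ (μ : EReal) ∧ (μ : EReal) ≤ lamP κ₀ r₀ rb c) ∧
    ((∫ x in (0 : ℝ)..c, zeta κ₀ r₀ rb μ c x) -
        (∫ x in (0 : ℝ)..b, zeta κ₀ r₀ rb μ b x) = μ * (c - b)) ∧
    ∃ u v : ℝ, u ≤ v ∧ c - b ≤ v - u ∧
      {x ∈ Set.Icc (0 : ℝ) c | zeta κ₀ r₀ rb μ c x = μ} = Set.Icc u v :=
  stmt16_general κ₀ r₀ rb b c μ hκ hcompat hbc h₁ h₂
end
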